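/- arXiv:1408.0201 — 15 statements merged into one kernel-verified Lean document; each statement's English description precedes it below -/
import Mathlib

section
/- Let ρ₋, ρ₊ > 0 and u₋ > u₊ be real numbers, and set σ = (√ρ₋ u₋ + √ρ₊ u₊)/(√ρ₋ + √ρ₊). Then (i) u₊ < σ < u₋ (entropy condition), (ii) √(ρ₋ρ₊)(u₋ − u₊) = σ(ρ₊ − ρ₋) − (ρ₊u₊ − ρ₋u₋), and (iii) σ·√(ρ₋ρ₊)(u₋ − u₊) = σ(ρ₊u₊ − ρ₋u₋) − (ρ₊u₊² − ρ₋u₋²). Consequently the pair x(t) = σt, w(t) = √(ρ₋ρ₊)(u₋ − u₊)t/√(1+σ²) solves the generalized Rankine–Hugoniot relations dx/dt = σ, d(w√(1+σ²))/dt = σ[ρ] − [ρu], d(wσ√(1+σ²))/dt = σ[ρu] − [ρu²] with x(0) = 0, w(0) = 0. -/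
/-!
Write `a = √ρ₋`, `b = √ρ₊`. The speed is characterised by `σ (a + b) = a u₋ + b u₊`, i.e.
`b (σ - u₊) = a (u₋ - σ)`: with `a, b > 0` this puts `σ` strictly between `u₊` and `u₋`, and both
Rankine–Hugoniot right-hand sides become polynomial identities in `a, b`. Since they are constant in
time, the linear weight `w` solves the ODEs exactly.
-/

section DeltaShockSpeed

variable {a b σ um up : ℝ}

theorem lt_and_lt_of_mul_add_eq (ha : 0 < a) (hb : 0 < b) (hu : up < um)
    (hσ : σ * (a + b) = a * um + b * up) : up < σ ∧ σ < um := by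
  constructor <;> nlinarith

theorem mul_mul_sub_eq_mass_defect (hσ : σ * (a + b) = a * um + b * up) :
    a * b * (um - up) = σ * (b ^ 2 - a ^ 2) - (b ^ 2 * up - a ^ 2 * um) := by
  linear_combination (a - b) * hσ

/-- Modulo `σ` times the mass identity, this is `b² (σ - u₊)² = a² (σ - u₋)²`, and the difference
of the two sides has the vanishing factor `b (σ - u₊) + a (σ - u₋)`. -/
theorem mul_mul_mul_sub_eq_momentum_defect (hσ : σ * (a + b) = a * um + b * up) :
    σ * (a * b * (um - up)) = σ * (b ^ 2 * up - a ^ 2 * um) - (b ^ 2 * up ^ 2 - a ^ 2 * um ^ 2) := by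
  linear_combination (a * um - b * up) * hσ

end DeltaShockSpeed

theorem hasDerivAt_of_forall_eq_mul {f : ℝ → ℝ} {c : ℝ} (hf : ∀ s, f s = c * s) (t : ℝ) :
    HasDerivAt f c t := by
  rw [funext hf]
  simpa using (hasDerivAt_id t).const_mul c

/-- delta-shock solution of the generalized Rankine–Hugoniot
relations for the zero-pressure gas dynamics system. -/
theorem zero_pressure_delta_shock
    (ρm ρp um up : ℝ) (hρm : 0 < ρm) (hρp : 0 < ρp) (hu : up < um)
    (σ : ℝ)
    (hσ : σ = (Real.sqrt ρm * um + Real.sqrt ρp * up) /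
      (Real.sqrt ρm + Real.sqrt ρp))
    (x w : ℝ → ℝ) (hx : ∀ t, x t = σ * t)
    (hw : ∀ t, w t = Real.sqrt (ρm * ρp) * (um - up) * t /
      Real.sqrt (1 + σ ^ 2)) :
    (up < σ ∧ σ < um) ∧
    Real.sqrt (ρm * ρp) * (um - up)
      = σ * (ρp - ρm) - (ρp * up - ρm * um) ∧
    σ * (Real.sqrt (ρm * ρp) * (um - up))
      = σ * (ρp * up - ρm * um) - (ρp * up ^ 2 - ρm * um ^ 2) ∧
    x 0 = 0 ∧ w 0 = 0 ∧
    (∀ t, HasDerivAt x σ t) ∧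
    (∀ t, HasDerivAt (fun s => w s * Real.sqrt (1 + σ ^ 2))
      (σ * (ρp - ρm) - (ρp * up - ρm * um)) t) ∧
    (∀ t, HasDerivAt (fun s => w s * σ * Real.sqrt (1 + σ ^ 2))
      (σ * (ρp * up - ρm * um) - (ρp * up ^ 2 - ρm * um ^ 2)) t) := by
  have ha := Real.sqrt_pos.2 hρm
  have hb := Real.sqrt_pos.2 hρp
  have hσ' : σ * (Real.sqrt ρm + Real.sqrt ρp) = Real.sqrt ρm * um + Real.sqrt ρp * up := by
    rw [hσ, div_mul_cancel₀ _ (add_pos ha hb).ne']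
  have hmass := mul_mul_sub_eq_mass_defect hσ'
  have hmomentum := mul_mul_mul_sub_eq_momentum_defect hσ'
  rw [← Real.sqrt_mul hρm.le, Real.sq_sqrt hρm.le, Real.sq_sqrt hρp.le] at hmass hmomentum
  have hK : Real.sqrt (1 + σ ^ 2) ≠ 0 := (Real.sqrt_pos.2 (by positivity)).ne'
  have hwK : ∀ s, w s * Real.sqrt (1 + σ ^ 2) = Real.sqrt (ρm * ρp) * (um - up) * s := by
    intro s
    rw [hw, div_mul_cancel₀ _ hK]
  refine ⟨lt_and_lt_of_mul_add_eq ha hb hu hσ', hmass, hmomentum, by simp [hx], by simp [hw],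
    hasDerivAt_of_forall_eq_mul hx, hasDerivAt_of_forall_eq_mul fun s => ?_,
    hasDerivAt_of_forall_eq_mul fun s => ?_⟩
  · rw [hwK, hmass]
  · rw [mul_right_comm, hwK, ← hmomentum]
    ring
end

section
/- Let ε₁ > 0, let ρ₋, ρ₊ satisfy ρ₋, ρ₊ > ε₁ and ρ₋ ≠ ρ₊, and let u₋ > u₊. Define σ^{ε₁} = ( [(ρ₊−ε₁)u₊ − (ρ₋−ε₁)u₋] + √((ρ₋−ε₁)(ρ₊−ε₁))·(u₋ − u₊) ) / (ρ₊ − ρ₋). Then (i) σ^{ε₁} is a root of the quadratic equation (ρ₊−ρ₋)σ² − 2((ρ₊−ε₁)u₊ − (ρ₋−ε₁)u₋)σ + ((ρ₊−ε₁)u₊² − (ρ₋−ε₁)u₋²) = 0; (ii) σ^{ε₁} = (√(ρ₋−ε₁) u₋ + √(ρ₊−ε₁) u₊)/(√(ρ₋−ε₁) + √(ρ₊−ε₁)); and (iii) u₊ < σ^{ε₁} < u₋. -/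
/-!
Write `ρ₋ - ε₁ = a²` and `ρ₊ - ε₁ = b²` with `a, b > 0`. The numerator of `σ^{ε₁}` factors as
`(b - a)(a u₋ + b u₊)` and its denominator as `(b - a)(b + a)`, so `σ^{ε₁}` is the weighted mean
`(a u₋ + b u₊)/(a + b)`, which lies strictly between `u₊` and `u₋`. The quadratic is
`b²(σ - u₊)² - a²(σ - u₋)²`, and the weighted mean satisfies `b(σ - u₊) = -a(σ - u₋)`.
-/

namespace DeltaShock

variable {a b um up σ : ℝ}

theorem speed_eq_weightedMean (hab : a ^ 2 ≠ b ^ 2) :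
    ((b ^ 2 * up - a ^ 2 * um) + a * b * (um - up)) / (b ^ 2 - a ^ 2) =
      (a * um + b * up) / (a + b) := by
  have hden : b ^ 2 - a ^ 2 ≠ 0 := sub_ne_zero.2 hab.symm
  have hsum : a + b ≠ 0 := fun h => hden (by rw [eq_neg_of_add_eq_zero_left h]; ring)
  rw [div_eq_div_iff hden hsum]
  ring

theorem quadratic_eq_zero_of_weightedMean (hσ : (a + b) * σ = a * um + b * up) :
    (b ^ 2 - a ^ 2) * σ ^ 2 - 2 * (b ^ 2 * up - a ^ 2 * um) * σ +
      (b ^ 2 * up ^ 2 - a ^ 2 * um ^ 2) = 0 := by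
  have hbal : b * (σ - up) = -(a * (σ - um)) := by linarith
  calc (b ^ 2 - a ^ 2) * σ ^ 2 - 2 * (b ^ 2 * up - a ^ 2 * um) * σ +
        (b ^ 2 * up ^ 2 - a ^ 2 * um ^ 2)
      = (b * (σ - up)) ^ 2 - (a * (σ - um)) ^ 2 := by ring
    _ = 0 := by rw [hbal]; ring

theorem weightedMean_mem_Ioo (ha : 0 < a) (hb : 0 < b) (hu : up < um) :
    up < (a * um + b * up) / (a + b) ∧ (a * um + b * up) / (a + b) < um := by
  have hsum : 0 < a + b := add_pos ha hb
  constructor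
  · rw [lt_div_iff₀ hsum]
    nlinarith
  · rw [div_lt_iff₀ hsum]
    nlinarith

theorem speed_spec {M P : ℝ} (hM : 0 < M) (hP : 0 < P) (hne : M ≠ P) (hu : up < um)
    (hσ : σ = ((P * up - M * um) + Real.sqrt (M * P) * (um - up)) / (P - M)) :
    (P - M) * σ ^ 2 - 2 * (P * up - M * um) * σ + (P * up ^ 2 - M * um ^ 2) = 0 ∧
      σ = (Real.sqrt M * um + Real.sqrt P * up) / (Real.sqrt M + Real.sqrt P) ∧
      up < σ ∧ σ < um := by
  obtain ⟨a, ha, rfl⟩ : ∃ a, 0 < a ∧ a ^ 2 = M := ⟨_, Real.sqrt_pos.2 hM, Real.sq_sqrt hM.le⟩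
  obtain ⟨b, hb, rfl⟩ : ∃ b, 0 < b ∧ b ^ 2 = P := ⟨_, Real.sqrt_pos.2 hP, Real.sq_sqrt hP.le⟩
  rw [← mul_pow, Real.sqrt_sq (mul_pos ha hb).le, speed_eq_weightedMean hne] at hσ
  rw [Real.sqrt_sq ha.le, Real.sqrt_sq hb.le]
  subst hσ
  refine ⟨quadratic_eq_zero_of_weightedMean ?_, rfl, weightedMean_mem_Ioo ha hb hu⟩
  field_simp

end DeltaShock

theorem flux_perturbed_delta_shock_speed_general
    (ε₁ ρm ρp um up : ℝ) (hρm : ε₁ < ρm) (hρp : ε₁ < ρp)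
    (hne : ρm ≠ ρp) (hu : up < um) (σ : ℝ)
    (hσ : σ = (((ρp - ε₁) * up - (ρm - ε₁) * um) +
      Real.sqrt ((ρm - ε₁) * (ρp - ε₁)) * (um - up)) / (ρp - ρm)) :
    (ρp - ρm) * σ ^ 2 - 2 * ((ρp - ε₁) * up - (ρm - ε₁) * um) * σ +
      ((ρp - ε₁) * up ^ 2 - (ρm - ε₁) * um ^ 2) = 0 ∧
    σ = (Real.sqrt (ρm - ε₁) * um + Real.sqrt (ρp - ε₁) * up) /
      (Real.sqrt (ρm - ε₁) + Real.sqrt (ρp - ε₁)) ∧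
    up < σ ∧ σ < um := by
  have hshift : ρp - ρm = (ρp - ε₁) - (ρm - ε₁) := by ring
  rw [hshift] at hσ ⊢
  exact DeltaShock.speed_spec (sub_pos.2 hρm) (sub_pos.2 hρp)
    (fun h => hne (sub_left_injective h)) hu hσ

/-- the delta-shock speed of the flux-perturbed pressureless
system: quadratic equation, closed form, and entropy condition. -/
theorem flux_perturbed_delta_shock_speed
    (ε₁ ρm ρp um up : ℝ) (hε : 0 < ε₁) (hρm : ε₁ < ρm) (hρp : ε₁ < ρp)
    (hne : ρm ≠ ρp) (hu : up < um) (σ : ℝ)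
    (hσ : σ = (((ρp - ε₁) * up - (ρm - ε₁) * um) +
      Real.sqrt ((ρm - ε₁) * (ρp - ε₁)) * (um - up)) / (ρp - ρm)) :
    (ρp - ρm) * σ ^ 2 - 2 * ((ρp - ε₁) * up - (ρm - ε₁) * um) * σ +
      ((ρp - ε₁) * up ^ 2 - (ρm - ε₁) * um ^ 2) = 0 ∧
    σ = (Real.sqrt (ρm - ε₁) * um + Real.sqrt (ρp - ε₁) * up) /
      (Real.sqrt (ρm - ε₁) + Real.sqrt (ρp - ε₁)) ∧
    up < σ ∧ σ < um :=
  flux_perturbed_delta_shock_speed_general ε₁ ρm ρp um up hρm hρp hne hu σ hσ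
end

section
/- Let ε₁ > 0, ρ₋, ρ₊ > ε₁ with ρ₋ ≠ ρ₊, u₋ > u₊, and let σ^{ε₁} = (√(ρ₋−ε₁) u₋ + √(ρ₊−ε₁) u₊)/(√(ρ₋−ε₁) + √(ρ₊−ε₁)). Set c^{ε₁} = ε₁(u₊ − u₋) + √((ρ₋−ε₁)(ρ₊−ε₁))(u₋ − u₊). Then (i) c^{ε₁} = σ^{ε₁}(ρ₊ − ρ₋) − ((ρ₊ − 2ε₁)u₊ − (ρ₋ − 2ε₁)u₋), and (ii) σ^{ε₁}·c^{ε₁} = σ^{ε₁}(ρ₊u₊ − ρ₋u₋) − ((ρ₊ − ε₁)u₊² − (ρ₋ − ε₁)u₋²). Consequently x(t) = σ^{ε₁}t and w^{ε₁}(t) = c^{ε₁}t/√(1+(σ^{ε₁})²) solve the generalized Rankine–Hugoniot relations of the flux-perturbed pressureless system with x(0)=0, w^{ε₁}(0)=0. -/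
/-! With `a = √(ρ₋ - ε₁)` and `b = √(ρ₊ - ε₁)` the speed satisfies `σ (a + b) = a u₋ + b u₊`,
and `ρ₋ = a² + ε₁`, `ρ₊ = b² + ε₁`; both jump identities are polynomial consequences of these
three relations. Since `w √(1 + σ²) = c t` is linear in `t`, the generalized Rankine–Hugoniot
relations reduce to the two identities. -/

section JumpIdentities

variable {ε ρm ρp um up a b σ : ℝ}

theorem mass_jump_eq_of_weighted_speed (ha : a ^ 2 = ρm - ε) (hb : b ^ 2 = ρp - ε)
    (hσ : σ * (a + b) = a * um + b * up) :
    ε * (up - um) + a * b * (um - up) =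
      σ * (ρp - ρm) - ((ρp - 2 * ε) * up - (ρm - 2 * ε) * um) := by
  linear_combination (a - b) * hσ + (um - σ) * ha + (σ - up) * hb

theorem momentum_jump_eq_of_weighted_speed (ha : a ^ 2 = ρm - ε) (hb : b ^ 2 = ρp - ε)
    (hσ : σ * (a + b) = a * um + b * up) :
    σ * (ε * (up - um) + a * b * (um - up)) =
      σ * (ρp * up - ρm * um) - ((ρp - ε) * up ^ 2 - (ρm - ε) * um ^ 2) := by
  linear_combination (a * um - b * up) * hσ + (um ^ 2 - σ * um) * ha + (σ * up - up ^ 2) * hb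

end JumpIdentities

theorem sqrt_weighted_mean_mul {p q um up σ : ℝ} (hp : 0 < p)
    (hσ : σ = (Real.sqrt p * um + Real.sqrt q * up) / (Real.sqrt p + Real.sqrt q)) :
    σ * (Real.sqrt p + Real.sqrt q) = Real.sqrt p * um + Real.sqrt q * up := by
  have : Real.sqrt p + Real.sqrt q ≠ 0 := by positivity
  rw [hσ, div_mul_cancel₀ _ this]

theorem flux_perturbed_delta_shock_solves_GRH_general
    (ε₁ ρm ρp um up : ℝ) (hρm : ε₁ < ρm) (hρp : ε₁ < ρp)
    (σ c : ℝ)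
    (hσ : σ = (Real.sqrt (ρm - ε₁) * um + Real.sqrt (ρp - ε₁) * up) /
      (Real.sqrt (ρm - ε₁) + Real.sqrt (ρp - ε₁)))
    (hc : c = ε₁ * (up - um) + Real.sqrt ((ρm - ε₁) * (ρp - ε₁)) * (um - up))
    (x w : ℝ → ℝ) (hx : ∀ t, x t = σ * t)
    (hw : ∀ t, w t = c * t / Real.sqrt (1 + σ ^ 2)) :
    c = σ * (ρp - ρm) - ((ρp - 2 * ε₁) * up - (ρm - 2 * ε₁) * um) ∧
    σ * c = σ * (ρp * up - ρm * um) -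
      ((ρp - ε₁) * up ^ 2 - (ρm - ε₁) * um ^ 2) ∧
    x 0 = 0 ∧ w 0 = 0 ∧
    (∀ t, HasDerivAt x σ t) ∧
    (∀ t, HasDerivAt (fun s => w s * Real.sqrt (1 + σ ^ 2))
      (σ * (ρp - ρm) - ((ρp - 2 * ε₁) * up - (ρm - 2 * ε₁) * um)) t) ∧
    (∀ t, HasDerivAt (fun s => w s * σ * Real.sqrt (1 + σ ^ 2))
      (σ * (ρp * up - ρm * um) -
        ((ρp - ε₁) * up ^ 2 - (ρm - ε₁) * um ^ 2)) t) := by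
  have ha := Real.sq_sqrt (sub_nonneg.2 hρm.le)
  have hb := Real.sq_sqrt (sub_nonneg.2 hρp.le)
  have hσ' := sqrt_weighted_mean_mul (sub_pos.2 hρm) hσ
  rw [Real.sqrt_mul (sub_nonneg.2 hρm.le)] at hc
  have hmass := mass_jump_eq_of_weighted_speed ha hb hσ'
  have hmomentum := momentum_jump_eq_of_weighted_speed ha hb hσ'
  rw [← hc] at hmass hmomentum
  have hk : Real.sqrt (1 + σ ^ 2) ≠ 0 := by positivity
  have hmass_weight : (fun s => w s * Real.sqrt (1 + σ ^ 2)) = fun s => c * s := by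
    funext s; rw [hw, div_mul_cancel₀ _ hk]
  have hmomentum_weight :
      (fun s => w s * σ * Real.sqrt (1 + σ ^ 2)) = fun s => σ * c * s := by
    funext s; rw [hw]; field_simp
  refine ⟨hmass, hmomentum, by simp [hx], by simp [hw], fun t => ?_, fun t => ?_, fun t => ?_⟩
  · simpa only [funext hx] using hasDerivAt_const_mul σ
  · simpa only [hmass_weight, hmass] using hasDerivAt_const_mul c
  · simpa only [hmomentum_weight, hmomentum] using hasDerivAt_const_mul (σ * c)

/-- the pair (x(t), w^ε₁(t)) solves the generalized
Rankine–Hugoniot relations of the flux-perturbed pressureless system. -/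
theorem flux_perturbed_delta_shock_solves_GRH
    (ε₁ ρm ρp um up : ℝ) (hε : 0 < ε₁) (hρm : ε₁ < ρm) (hρp : ε₁ < ρp)
    (hne : ρm ≠ ρp) (hu : up < um) (σ c : ℝ)
    (hσ : σ = (Real.sqrt (ρm - ε₁) * um + Real.sqrt (ρp - ε₁) * up) /
      (Real.sqrt (ρm - ε₁) + Real.sqrt (ρp - ε₁)))
    (hc : c = ε₁ * (up - um) + Real.sqrt ((ρm - ε₁) * (ρp - ε₁)) * (um - up))
    (x w : ℝ → ℝ) (hx : ∀ t, x t = σ * t)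
    (hw : ∀ t, w t = c * t / Real.sqrt (1 + σ ^ 2)) :
    c = σ * (ρp - ρm) - ((ρp - 2 * ε₁) * up - (ρm - 2 * ε₁) * um) ∧
    σ * c = σ * (ρp * up - ρm * um) -
      ((ρp - ε₁) * up ^ 2 - (ρm - ε₁) * um ^ 2) ∧
    x 0 = 0 ∧ w 0 = 0 ∧
    (∀ t, HasDerivAt x σ t) ∧
    (∀ t, HasDerivAt (fun s => w s * Real.sqrt (1 + σ ^ 2))
      (σ * (ρp - ρm) - ((ρp - 2 * ε₁) * up - (ρm - 2 * ε₁) * um)) t) ∧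
    (∀ t, HasDerivAt (fun s => w s * σ * Real.sqrt (1 + σ ^ 2))
      (σ * (ρp * up - ρm * um) -
        ((ρp - ε₁) * up ^ 2 - (ρm - ε₁) * um ^ 2)) t) :=
  flux_perturbed_delta_shock_solves_GRH_general ε₁ ρm ρp um up hρm hρp σ c hσ hc x w hx hw
end

section
/- Let ρ₋, ρ₊ > 0 with ρ₋ ≠ ρ₊ and u₋ > u₊. For 0 < ε₁ < min(ρ₋,ρ₊), define σ^{ε₁} = (√(ρ₋−ε₁) u₋ + √(ρ₊−ε₁) u₊)/(√(ρ₋−ε₁) + √(ρ₊−ε₁)) and, for t ≥ 0, w^{ε₁}(t) = (ε₁(u₊−u₋) + √((ρ₋−ε₁)(ρ₊−ε₁))(u₋−u₊)) t / √(1+(σ^{ε₁})²). Then, as ε₁ → 0⁺, σ^{ε₁} converges to σ = (√ρ₋ u₋ + √ρ₊ u₊)/(√ρ₋ + √ρ₊) and, for every t ≥ 0, w^{ε₁}(t) converges to w(t) = √(ρ₋ρ₊)(u₋−u₊) t / √(1+σ²). -/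
/-!
Both the speed and the weight are continuous functions of ε₁ at ε₁ = 0: the only denominators
are √(ρ₋ - ε₁) + √(ρ₊ - ε₁), which stays positive as long as ε₁ < ρ₋, and √(1 + σ²) ≥ 1.
Setting ε₁ = 0 in the perturbed formulas gives the unperturbed ones.
-/

open Filter Topology Set

noncomputable def deltaShockSpeed (ρm ρp um up : ℝ) : ℝ :=
  (√ρm * um + √ρp * up) / (√ρm + √ρp)

lemma continuousAt_deltaShockSpeed_sub {ρm ρp um up ε₀ : ℝ} (h : ε₀ < ρm) :
    ContinuousAt (fun ε => deltaShockSpeed (ρm - ε) (ρp - ε) um up) ε₀ := by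
  have hden : √(ρm - ε₀) + √(ρp - ε₀) ≠ 0 :=
    (add_pos_of_pos_of_nonneg (Real.sqrt_pos.mpr (sub_pos.mpr h)) (Real.sqrt_nonneg _)).ne'
  unfold deltaShockSpeed
  exact ContinuousAt.div (by fun_prop) (by fun_prop) hden

lemma continuousAt_perturbedWeight {ρm ρp um up t ε₀ : ℝ} (h : ε₀ < ρm) :
    ContinuousAt (fun ε => (ε * (up - um) + √((ρm - ε) * (ρp - ε)) * (um - up)) * t /
      √(1 + deltaShockSpeed (ρm - ε) (ρp - ε) um up ^ 2)) ε₀ := by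
  have hden : √(1 + deltaShockSpeed (ρm - ε₀) (ρp - ε₀) um up ^ 2) ≠ 0 :=
    Real.sqrt_ne_zero'.mpr (by positivity)
  have hspeed := continuousAt_deltaShockSpeed_sub (ρp := ρp) (um := um) (up := up) h
  exact ContinuousAt.div (by fun_prop) (by fun_prop) hden

lemma ContinuousAt.tendsto_nhdsWithin_of_eqOn {α β : Type*} [TopologicalSpace α]
    [TopologicalSpace β] {f g : α → β} {a : α} {s : Set α}
    (hf : ContinuousAt f a) (hfg : EqOn f g s) : Tendsto g (𝓝[s] a) (𝓝 (f a)) :=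
  (hf.tendsto.mono_left nhdsWithin_le_nhds).congr' (eventuallyEq_nhdsWithin_of_eqOn hfg)

theorem flux_perturbed_delta_shock_limit_general
    (ρm ρp um up : ℝ) (hρm : 0 < ρm)
    (σε : ℝ → ℝ) (wε : ℝ → ℝ → ℝ) (σ : ℝ) (w : ℝ → ℝ)
    (hσε : ∀ ε₁, 0 < ε₁ → ε₁ < min ρm ρp →
      σε ε₁ = (Real.sqrt (ρm - ε₁) * um + Real.sqrt (ρp - ε₁) * up) /
        (Real.sqrt (ρm - ε₁) + Real.sqrt (ρp - ε₁)))
    (hwε : ∀ ε₁, 0 < ε₁ → ε₁ < min ρm ρp → ∀ t, 0 ≤ t →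
      wε ε₁ t = (ε₁ * (up - um) +
        Real.sqrt ((ρm - ε₁) * (ρp - ε₁)) * (um - up)) * t /
        Real.sqrt (1 + (σε ε₁) ^ 2))
    (hσ : σ = (Real.sqrt ρm * um + Real.sqrt ρp * up) /
      (Real.sqrt ρm + Real.sqrt ρp))
    (hw : ∀ t, w t = Real.sqrt (ρm * ρp) * (um - up) * t /
      Real.sqrt (1 + σ ^ 2)) :
    Filter.Tendsto σε (nhdsWithin 0 (Set.Ioo 0 (min ρm ρp))) (nhds σ) ∧
    ∀ t, 0 ≤ t →
      Filter.Tendsto (fun ε₁ => wε ε₁ t)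
        (nhdsWithin 0 (Set.Ioo 0 (min ρm ρp))) (nhds (w t)) := by
  have hσ₀ : deltaShockSpeed (ρm - 0) (ρp - 0) um up = σ := by
    simp only [sub_zero, deltaShockSpeed, hσ]
  have hσε' : EqOn (fun ε => deltaShockSpeed (ρm - ε) (ρp - ε) um up) σε
      (Ioo 0 (min ρm ρp)) := fun ε hε => (hσε ε hε.1 hε.2).symm
  refine ⟨hσ₀ ▸ (continuousAt_deltaShockSpeed_sub hρm).tendsto_nhdsWithin_of_eqOn hσε',
    fun t ht => ?_⟩
  have hw₀ : (0 * (up - um) + √((ρm - 0) * (ρp - 0)) * (um - up)) * t /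
      √(1 + deltaShockSpeed (ρm - 0) (ρp - 0) um up ^ 2) = w t := by
    rw [hσ₀, hw t]
    simp only [zero_mul, zero_add, sub_zero]
  refine hw₀ ▸ (continuousAt_perturbedWeight hρm).tendsto_nhdsWithin_of_eqOn fun ε hε => ?_
  rw [hwε ε hε.1 hε.2 t ht, ← hσε' hε]

/-- as ε₁ → 0⁺ the delta-shock speed and weight of the
flux-perturbed pressureless system converge to those of the zero-pressure
gas dynamics system. -/
theorem flux_perturbed_delta_shock_limit
    (ρm ρp um up : ℝ) (hρm : 0 < ρm) (hρp : 0 < ρp) (hne : ρm ≠ ρp)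
    (hu : up < um)
    (σε : ℝ → ℝ) (wε : ℝ → ℝ → ℝ) (σ : ℝ) (w : ℝ → ℝ)
    (hσε : ∀ ε₁, 0 < ε₁ → ε₁ < min ρm ρp →
      σε ε₁ = (Real.sqrt (ρm - ε₁) * um + Real.sqrt (ρp - ε₁) * up) /
        (Real.sqrt (ρm - ε₁) + Real.sqrt (ρp - ε₁)))
    (hwε : ∀ ε₁, 0 < ε₁ → ε₁ < min ρm ρp → ∀ t, 0 ≤ t →
      wε ε₁ t = (ε₁ * (up - um) +
        Real.sqrt ((ρm - ε₁) * (ρp - ε₁)) * (um - up)) * t /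
        Real.sqrt (1 + (σε ε₁) ^ 2))
    (hσ : σ = (Real.sqrt ρm * um + Real.sqrt ρp * up) /
      (Real.sqrt ρm + Real.sqrt ρp))
    (hw : ∀ t, w t = Real.sqrt (ρm * ρp) * (um - up) * t /
      Real.sqrt (1 + σ ^ 2)) :
    Filter.Tendsto σε (nhdsWithin 0 (Set.Ioo 0 (min ρm ρp))) (nhds σ) ∧
    ∀ t, 0 ≤ t →
      Filter.Tendsto (fun ε₁ => wε ε₁ t)
        (nhdsWithin 0 (Set.Ioo 0 (min ρm ρp))) (nhds (w t)) :=
  flux_perturbed_delta_shock_limit_general ρm ρp um up hρm σε wε σ w hσε hwε hσ hw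
end

section
/- Let ε₁, ε₂ > 0, γ > 1, ρ > 2ε₁ and u ∈ ℝ. Define λ₁(ρ,u) = u − √(ε₂ρ^{γ−2}(ρ − 2ε₁)), λ₂(ρ,u) = u + √(ε₂ρ^{γ−2}(ρ − 2ε₁)), r₁ = (1, −√(ε₂ρ^{γ−2}/(ρ − 2ε₁))), r₂ = (1, √(ε₂ρ^{γ−2}/(ρ − 2ε₁))). Then ∇λ₁(ρ,u)·r₁ ≠ 0 and ∇λ₂(ρ,u)·r₂ ≠ 0, where ∇λ = (∂λ/∂ρ, ∂λ/∂u); that is, both characteristic fields are genuinely nonlinear on the region ρ > 2ε₁. -/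
/-!
Both eigenvalues have the form `u ∓ c(ρ)` with `c(ρ) = √(ε₂ ρ^(γ-2) (ρ - 2ε₁))`, and the
eigenvectors have the form `(1, ∓s)` with `s > 0`, so `∇λᵢ · rᵢ = ∓(c'(ρ) + s)`. It therefore
suffices that `c` is nondecreasing, which holds because
`d/dρ (ρ^(γ-2) (ρ - 2ε₁)) = ρ^(γ-3) ((γ-1)(ρ - 2ε₁) + 2ε₁) > 0` for `γ > 1`.
-/

open ContinuousLinearMap

theorem hasDerivAt_mul_rpow_mul_sub (c a b : ℝ) {x : ℝ} (hx : x ≠ 0) :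
    HasDerivAt (fun y => c * y ^ a * (y - b)) (c * x ^ (a - 1) * ((a + 1) * x - a * b)) x := by
  have h := ((Real.hasDerivAt_rpow_const (p := a) (Or.inl hx)).const_mul c).mul
    ((hasDerivAt_id x).sub_const b)
  refine h.congr_deriv ?_
  rw [Real.rpow_sub_one hx, id]
  field_simp
  ring

theorem exists_pos_hasDerivAt_sqrt_mul_rpow_mul_sub {c a b x : ℝ} (hc : 0 < c) (ha : -1 < a)
    (hb : 0 ≤ b) (hx : b < x) :
    ∃ d, 0 < d ∧ HasDerivAt (fun y => √(c * y ^ a * (y - b))) d x := by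
  have hx₀ : 0 < x := hb.trans_lt hx
  have hpos : 0 < c * x ^ a * (x - b) := by
    have := Real.rpow_pos_of_pos hx₀ a
    have : 0 < x - b := sub_pos.2 hx
    positivity
  refine ⟨_, ?_, (hasDerivAt_mul_rpow_mul_sub c a b hx₀.ne').sqrt hpos.ne'⟩
  have hlin : 0 < (a + 1) * x - a * b := by nlinarith
  have := Real.rpow_pos_of_pos hx₀ (a - 1)
  have := Real.sqrt_pos.2 hpos
  positivity

theorem hasFDerivAt_snd_add_comp_fst {f : ℝ → ℝ} {f' : ℝ} {p : ℝ × ℝ}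
    (hf : HasDerivAt f f' p.1) :
    HasFDerivAt (fun q : ℝ × ℝ => q.2 + f q.1) (snd ℝ ℝ ℝ + f' • fst ℝ ℝ ℝ) p :=
  hasFDerivAt_snd.add (hf.comp_hasFDerivAt p hasFDerivAt_fst)

theorem hasFDerivAt_snd_sub_comp_fst {f : ℝ → ℝ} {f' : ℝ} {p : ℝ × ℝ}
    (hf : HasDerivAt f f' p.1) :
    HasFDerivAt (fun q : ℝ × ℝ => q.2 - f q.1) (snd ℝ ℝ ℝ - f' • fst ℝ ℝ ℝ) p :=
  hasFDerivAt_snd.sub (hf.comp_hasFDerivAt p hasFDerivAt_fst)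

/-- both characteristic fields of the flux-perturbed isentropic
Euler system are genuinely nonlinear on ρ > 2ε₁: the gradients of the
eigenvalues paired with the corresponding right eigenvectors do not vanish. -/
theorem flux_perturbed_genuinely_nonlinear
    (ε₁ ε₂ γ ρ u : ℝ) (hε₁ : 0 < ε₁) (hε₂ : 0 < ε₂) (hγ : 1 < γ)
    (hρ : 2 * ε₁ < ρ)
    (lam1 lam2 : ℝ × ℝ → ℝ)
    (hl1 : ∀ p : ℝ × ℝ,
      lam1 p = p.2 - Real.sqrt (ε₂ * p.1 ^ (γ - 2) * (p.1 - 2 * ε₁)))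
    (hl2 : ∀ p : ℝ × ℝ,
      lam2 p = p.2 + Real.sqrt (ε₂ * p.1 ^ (γ - 2) * (p.1 - 2 * ε₁)))
    (r1 r2 : ℝ × ℝ)
    (hr1 : r1 = (1, -Real.sqrt (ε₂ * ρ ^ (γ - 2) / (ρ - 2 * ε₁))))
    (hr2 : r2 = (1, Real.sqrt (ε₂ * ρ ^ (γ - 2) / (ρ - 2 * ε₁)))) :
    (∃ d : ℝ × ℝ →L[ℝ] ℝ, HasFDerivAt lam1 d (ρ, u) ∧ d r1 ≠ 0) ∧
    (∃ d : ℝ × ℝ →L[ℝ] ℝ, HasFDerivAt lam2 d (ρ, u) ∧ d r2 ≠ 0) := by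
  obtain ⟨c', hc'_pos, hc'⟩ := exists_pos_hasDerivAt_sqrt_mul_rpow_mul_sub hε₂
    (by linarith : -1 < γ - 2) (by linarith : 0 ≤ 2 * ε₁) hρ
  have hs : 0 ≤ √(ε₂ * ρ ^ (γ - 2) / (ρ - 2 * ε₁)) := Real.sqrt_nonneg _
  refine ⟨⟨_, funext hl1 ▸ hasFDerivAt_snd_sub_comp_fst (p := (ρ, u)) hc', ?_⟩,
    ⟨_, funext hl2 ▸ hasFDerivAt_snd_add_comp_fst (p := (ρ, u)) hc', ?_⟩⟩
  · simp only [hr1, sub_apply, smul_apply, coe_snd', coe_fst', smul_eq_mul]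
    linarith
  · simp only [hr2, add_apply, smul_apply, coe_snd', coe_fst', smul_eq_mul]
    linarith
end

section
/- Let γ > 1, ε₂ > 0, 0 < 2ε₁ < ρ₋, and define on (ρ₋, ∞) the function u(ρ) = u₋ − √( ε₂(ρ − ρ₋)(ρ^γ − ρ₋^γ) / (γ(ρ₋ρ − ε₁(ρ + ρ₋))) ). Then the denominator satisfies ρ₋ρ − ε₁(ρ + ρ₋) > 0 for all ρ > ρ₋, and u is strictly decreasing on (ρ₋, ∞). -/
/-!
The radicand factors as `(ε₂ / γ) · (ρ - ρ₋) / D(ρ) · (ρ^γ - ρ₋^γ)` with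
`D(ρ) = ρ₋ρ - ε₁(ρ + ρ₋) = (ρ₋ - ε₁)(ρ - ε₁) - ε₁²`, which is positive because both factors exceed
`ε₁`. The Möbius map `(ρ - ρ₋) / D(ρ)` is increasing since its cross difference is
`(b - a) ρ₋ (ρ₋ - 2ε₁) > 0`, and `ρ^γ - ρ₋^γ` is increasing for `γ > 0`; both vanish at `ρ₋`, so
their product, hence the square root, increases on `[ρ₋, ∞)`.
-/

open Set

noncomputable def shockRadicand (γ ε₁ ε₂ ρm ρ : ℝ) : ℝ :=
  ε₂ * (ρ - ρm) * (ρ ^ γ - ρm ^ γ) / (γ * (ρm * ρ - ε₁ * (ρ + ρm)))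

section ShockCurve

variable {γ ε₁ ε₂ ρm : ℝ}

lemma shock_denominator_pos (hε₁ : 0 ≤ ε₁) (hρm : 2 * ε₁ < ρm) {ρ : ℝ} (hρ : ρm ≤ ρ) :
    0 < ρm * ρ - ε₁ * (ρ + ρm) := by
  have h := mul_lt_mul'' (by linarith : ε₁ < ρm - ε₁) (by linarith : ε₁ < ρ - ε₁) hε₁ hε₁
  linear_combination h

lemma strictMonoOn_sub_div_shock_denominator (hε₁ : 0 ≤ ε₁) (hρm : 2 * ε₁ < ρm) :
    StrictMonoOn (fun ρ ↦ (ρ - ρm) / (ρm * ρ - ε₁ * (ρ + ρm))) (Ici ρm) := by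
  intro a ha b hb hab
  rw [div_lt_div_iff₀ (shock_denominator_pos hε₁ hρm ha) (shock_denominator_pos hε₁ hρm hb)]
  have h := mul_pos (sub_pos.2 hab) (mul_pos (by linarith : 0 < ρm) (sub_pos.2 hρm))
  linear_combination h

lemma shockRadicand_eq (ρ : ℝ) :
    shockRadicand γ ε₁ ε₂ ρm ρ =
      ε₂ / γ * ((ρ - ρm) / (ρm * ρ - ε₁ * (ρ + ρm)) * (ρ ^ γ - ρm ^ γ)) := by
  simp only [shockRadicand, div_eq_mul_inv, mul_inv]
  ring

lemma shockRadicand_nonneg (hγ : 0 ≤ γ) (hε₂ : 0 ≤ ε₂) (hε₁ : 0 ≤ ε₁) (hρm : 2 * ε₁ < ρm)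
    {ρ : ℝ} (hρ : ρm ≤ ρ) : 0 ≤ shockRadicand γ ε₁ ε₂ ρm ρ := by
  have hρm₀ : 0 ≤ ρm := by linarith
  rw [shockRadicand_eq]
  have hD := shock_denominator_pos hε₁ hρm hρ
  have hpow := Real.rpow_le_rpow hρm₀ hρ hγ
  exact mul_nonneg (div_nonneg hε₂ hγ)
    (mul_nonneg (div_nonneg (sub_nonneg.2 hρ) hD.le) (sub_nonneg.2 hpow))

lemma strictMonoOn_shockRadicand (hγ : 0 < γ) (hε₂ : 0 < ε₂) (hε₁ : 0 ≤ ε₁)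
    (hρm : 2 * ε₁ < ρm) : StrictMonoOn (shockRadicand γ ε₁ ε₂ ρm) (Ici ρm) := by
  intro a ha b hb hab
  have hρm₀ : 0 ≤ ρm := by linarith
  rw [shockRadicand_eq, shockRadicand_eq]
  refine mul_lt_mul_of_pos_left (mul_lt_mul'' ?_ ?_ ?_ ?_) (div_pos hε₂ hγ)
  · exact strictMonoOn_sub_div_shock_denominator hε₁ hρm ha hb hab
  · exact sub_lt_sub_right (Real.rpow_lt_rpow (hρm₀.trans ha) hab hγ) _
  · exact div_nonneg (sub_nonneg.2 ha) (shock_denominator_pos hε₁ hρm ha).le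
  · exact sub_nonneg.2 (Real.rpow_le_rpow hρm₀ ha hγ.le)

end ShockCurve

/-- along the backward shock curve of the flux-perturbed
isentropic Euler system, the denominator ρ₋ρ − ε₁(ρ + ρ₋) is positive for
ρ > ρ₋ and the curve u(ρ) is strictly decreasing on (ρ₋, ∞). -/
theorem backward_shock_curve_strictly_decreasing
    (γ ε₁ ε₂ ρm um : ℝ) (hγ : 1 < γ) (hε₁ : 0 < ε₁) (hε₂ : 0 < ε₂)
    (hρ : 2 * ε₁ < ρm)
    (u : ℝ → ℝ)
    (hu : ∀ ρ, ρm < ρ → u ρ = um -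
      Real.sqrt (ε₂ * (ρ - ρm) * (ρ ^ γ - ρm ^ γ) /
        (γ * (ρm * ρ - ε₁ * (ρ + ρm))))) :
    (∀ ρ, ρm < ρ → 0 < ρm * ρ - ε₁ * (ρ + ρm)) ∧
    StrictAntiOn u (Set.Ioi ρm) := by
  have hγ₀ : 0 < γ := by linarith
  refine ⟨fun ρ hρρ ↦ shock_denominator_pos hε₁.le hρ hρρ.le, ?_⟩
  intro a ha b hb hab
  rw [hu a ha, hu b hb]
  refine sub_lt_sub_left (Real.sqrt_lt_sqrt ?_ ?_) um
  · exact shockRadicand_nonneg hγ₀.le hε₂.le hε₁.le hρ ha.le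
  · exact strictMonoOn_shockRadicand hγ₀ hε₂ hε₁.le hρ (mem_Ici.2 ha.le) (mem_Ici.2 hb.le) hab
end

section
/- Let γ > 1, ε₁, ε₂ > 0, ρ_l, ρ_r > 2ε₁ with ρ_l ≠ ρ_r, and let u_l, u_r, σ be real numbers satisfying the Rankine–Hugoniot relations −σ(ρ_r − ρ_l) + ((ρ_r − 2ε₁)u_r − (ρ_l − 2ε₁)u_l) = 0 and −σ(ρ_r u_r − ρ_l u_l) + ((ρ_r − ε₁)u_r² − (ρ_l − ε₁)u_l² + ε₂(ρ_r^γ − ρ_l^γ)/γ) = 0. Then (ρ_lρ_r − ε₁(ρ_l + ρ_r))(u_r − u_l)² = (ε₂/γ)(ρ_r − ρ_l)(ρ_r^γ − ρ_l^γ); moreover if u_r ≠ u_l then ρ_lρ_r − ε₁(ρ_l + ρ_r) > 0. -/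
section RankineHugoniot

variable {R : Type*}

/-- Multiplying the mass relation by `ρr * ur - ρl * ul` and the momentum relation by `ρr - ρl`
and subtracting eliminates the shock speed `σ`. -/
theorem rankineHugoniot_eliminate_speed [CommRing R] {ε ρl ρr ul ur σ Δp : R}
    (mass : -σ * (ρr - ρl) + ((ρr - 2 * ε) * ur - (ρl - 2 * ε) * ul) = 0)
    (momentum : -σ * (ρr * ur - ρl * ul) + ((ρr - ε) * ur ^ 2 - (ρl - ε) * ul ^ 2 + Δp) = 0) :
    (ρl * ρr - ε * (ρl + ρr)) * (ur - ul) ^ 2 = (ρr - ρl) * Δp := by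
  linear_combination (ρr * ur - ρl * ul) * mass - (ρr - ρl) * momentum

theorem mul_sub_mul_add_pos_of_two_mul_lt [CommRing R] [LinearOrder R] [IsStrictOrderedRing R]
    {ε a b : R} (hε : 0 ≤ ε) (ha : 2 * ε < a) (hb : 2 * ε < b) : 0 < a * b - ε * (a + b) := by
  have key : ε * ε < (a - ε) * (b - ε) :=
    mul_lt_mul'' (by linarith) (by linarith) hε hε
  linear_combination key

end RankineHugoniot

theorem rankine_hugoniot_elimination_general
    (γ ε₁ ε₂ ρl ρr ul ur σ : ℝ) (hε₁ : 0 < ε₁)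
    (hρl : 2 * ε₁ < ρl) (hρr : 2 * ε₁ < ρr)
    (rh1 : -σ * (ρr - ρl) + ((ρr - 2 * ε₁) * ur - (ρl - 2 * ε₁) * ul) = 0)
    (rh2 : -σ * (ρr * ur - ρl * ul) +
      ((ρr - ε₁) * ur ^ 2 - (ρl - ε₁) * ul ^ 2 +
        ε₂ * (ρr ^ γ - ρl ^ γ) / γ) = 0) :
    (ρl * ρr - ε₁ * (ρl + ρr)) * (ur - ul) ^ 2 =
      ε₂ / γ * (ρr - ρl) * (ρr ^ γ - ρl ^ γ) ∧
    (ur ≠ ul → 0 < ρl * ρr - ε₁ * (ρl + ρr)) := by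
  refine ⟨?_, fun _ => mul_sub_mul_add_pos_of_two_mul_lt hε₁.le hρl hρr⟩
  rw [rankineHugoniot_eliminate_speed rh1 rh2]
  ring

/-- eliminating the shock speed from the Rankine–Hugoniot
relations of the flux-perturbed isentropic Euler system yields
(ρ_lρ_r − ε₁(ρ_l+ρ_r))(u_r−u_l)² = (ε₂/γ)(ρ_r−ρ_l)(ρ_r^γ−ρ_l^γ), and the
left factor is positive whenever u_r ≠ u_l. -/
theorem rankine_hugoniot_elimination
    (γ ε₁ ε₂ ρl ρr ul ur σ : ℝ) (hγ : 1 < γ) (hε₁ : 0 < ε₁) (hε₂ : 0 < ε₂)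
    (hρl : 2 * ε₁ < ρl) (hρr : 2 * ε₁ < ρr) (hne : ρl ≠ ρr)
    (rh1 : -σ * (ρr - ρl) + ((ρr - 2 * ε₁) * ur - (ρl - 2 * ε₁) * ul) = 0)
    (rh2 : -σ * (ρr * ur - ρl * ul) +
      ((ρr - ε₁) * ur ^ 2 - (ρl - ε₁) * ul ^ 2 +
        ε₂ * (ρr ^ γ - ρl ^ γ) / γ) = 0) :
    (ρl * ρr - ε₁ * (ρl + ρr)) * (ur - ul) ^ 2 =
      ε₂ / γ * (ρr - ρl) * (ρr ^ γ - ρl ^ γ) ∧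
    (ur ≠ ul → 0 < ρl * ρr - ε₁ * (ρl + ρr)) :=
  rankine_hugoniot_elimination_general γ ε₁ ε₂ ρl ρr ul ur σ hε₁ hρl hρr rh1 rh2
end

section
/- Let γ > 1, ε₁, ε₂ > 0 and ρ_l, ρ_r > 2ε₁ with ρ_l ≠ ρ_r. Suppose (ρ_l,u_l), (ρ_r,u_r), σ satisfy the Rankine–Hugoniot relations −σ(ρ_r − ρ_l) + ((ρ_r − 2ε₁)u_r − (ρ_l − 2ε₁)u_l) = 0, −σ(ρ_r u_r − ρ_l u_l) + ((ρ_r − ε₁)u_r² − (ρ_l − ε₁)u_l² + ε₂(ρ_r^γ − ρ_l^γ)/γ) = 0, together with the Lax entropy inequalities for a backward shock: σ < u_l − √(ε₂ρ_l^{γ−2}(ρ_l − 2ε₁)) and u_r − √(ε₂ρ_r^{γ−2}(ρ_r − 2ε₁)) < σ < u_r + √(ε₂ρ_r^{γ−2}(ρ_r − 2ε₁)). Then ρ_l < ρ_r and u_r < u_l. -/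
/-!
Write `m = (ρ_l - 2ε₁)(u_l - σ) = (ρ_r - 2ε₁)(u_r - σ)` for the mass flux through the shock (the first
Rankine–Hugoniot relation). Multiplying the squared Lax inequalities by `(ρ - 2ε₁)²` squeezes `m²`
strictly between `ε₂ g(ρ_l)` and `ε₂ g(ρ_r)`, where `g(ρ) = ρ^(γ-2) (ρ - 2ε₁)³ = ρ^(γ+1) (1 - 2ε₁/ρ)³`
is monotone on `ρ > 2ε₁`; hence `ρ_l < ρ_r`. Since `m > 0`, the larger factor `ρ_r - 2ε₁` forces
`u_r - σ < u_l - σ`.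
-/

open Real Set

lemma rpow_sub_two_mul_pow_three {x : ℝ} (hx : 0 < x) (γ b : ℝ) :
    x ^ (γ - 2) * b ^ 3 = x ^ (γ + 1) * (b / x) ^ 3 := by
  rw [div_pow, show γ - 2 = (γ + 1) - ((3 : ℕ) : ℝ) by norm_num; ring, rpow_sub hx, rpow_natCast]
  ring

lemma monotoneOn_rpow_sub_two_mul_sub_pow_three {a γ : ℝ} (ha : 0 ≤ a) (hγ : -1 ≤ γ) :
    MonotoneOn (fun ρ : ℝ => ρ ^ (γ - 2) * (ρ - a) ^ 3) (Ioi a) := by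
  intro x (hx : a < x) y (hy : a < y) hxy
  have hx0 : 0 < x := ha.trans_lt hx
  have hy0 : 0 < y := ha.trans_lt hy
  have hratio : (x - a) / x ≤ (y - a) / y := by
    rw [sub_div, sub_div, div_self hx0.ne', div_self hy0.ne']
    exact sub_le_sub_left (div_le_div_of_nonneg_left ha hx0 hxy) 1
  simp only [rpow_sub_two_mul_pow_three hx0, rpow_sub_two_mul_pow_three hy0]
  have hxa : 0 ≤ (x - a) / x := div_nonneg (sub_nonneg.2 hx.le) hx0.le
  exact mul_le_mul (rpow_le_rpow hx0.le hxy (by linarith)) (pow_le_pow_left₀ hxa hratio 3)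
    (by positivity) (by positivity)

lemma mul_sq_lt_sq_mul_of_sqrt_lt {c X v : ℝ} (hc : 0 < c) (h : √X < v) :
    c ^ 2 * X < (c * v) ^ 2 := by
  rw [mul_pow]
  exact mul_lt_mul_of_pos_left (lt_sq_of_sqrt_lt h) (by positivity)

lemma sq_mul_lt_mul_sq_of_abs_lt_sqrt {c X v : ℝ} (hc : 0 < c) (hlo : -√X < v) (hhi : v < √X) :
    (c * v) ^ 2 < c ^ 2 * X := by
  rw [mul_pow]
  exact mul_lt_mul_of_pos_left (sq_lt.2 ⟨hlo, hhi⟩) (by positivity)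

theorem backward_shock_compressive_general
    (γ ε₁ ε₂ ρl ρr ul ur σ : ℝ) (hγ : 1 < γ) (hε₁ : 0 < ε₁) (hε₂ : 0 < ε₂)
    (hρl : 2 * ε₁ < ρl) (hρr : 2 * ε₁ < ρr)
    (rh1 : -σ * (ρr - ρl) + ((ρr - 2 * ε₁) * ur - (ρl - 2 * ε₁) * ul) = 0)
    (lax1 : σ < ul - Real.sqrt (ε₂ * ρl ^ (γ - 2) * (ρl - 2 * ε₁)))
    (lax2 : ur - Real.sqrt (ε₂ * ρr ^ (γ - 2) * (ρr - 2 * ε₁)) < σ)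
    (lax3 : σ < ur + Real.sqrt (ε₂ * ρr ^ (γ - 2) * (ρr - 2 * ε₁))) :
    ρl < ρr ∧ ur < ul := by
  have hcl : 0 < ρl - 2 * ε₁ := sub_pos.2 hρl
  have hcr : 0 < ρr - 2 * ε₁ := sub_pos.2 hρr
  have hflux : (ρr - 2 * ε₁) * (ur - σ) = (ρl - 2 * ε₁) * (ul - σ) := by linear_combination rh1
  have hleft := mul_sq_lt_sq_mul_of_sqrt_lt hcl (lt_sub_comm.1 lax1)
  have hright := sq_mul_lt_mul_sq_of_abs_lt_sqrt hcr (by linarith) (sub_lt_comm.1 lax2)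
  have hg : ε₂ * (ρl ^ (γ - 2) * (ρl - 2 * ε₁) ^ 3) < ε₂ * (ρr ^ (γ - 2) * (ρr - 2 * ε₁) ^ 3) := by
    rw [hflux] at hright
    linarith [hleft.trans hright]
  have hρ : ρl < ρr :=
    (monotoneOn_rpow_sub_two_mul_sub_pow_three (by positivity) (by linarith)).reflect_lt hρl hρr
      (lt_of_mul_lt_mul_left hg hε₂.le)
  have hul : 0 < ul - σ := (sqrt_nonneg _).trans_lt (lt_sub_comm.1 lax1)
  have hu : (ρr - 2 * ε₁) * (ur - σ) < (ρr - 2 * ε₁) * (ul - σ) := by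
    rw [hflux]
    exact mul_lt_mul_of_pos_right (by linarith) hul
  exact ⟨hρ, by linarith [lt_of_mul_lt_mul_left hu hcr.le]⟩

/-- for a backward shock of the flux-perturbed isentropic
Euler system (Rankine–Hugoniot relations together with the Lax entropy
inequalities), the density increases and the velocity decreases across
the shock: ρ_l < ρ_r and u_r < u_l. -/
theorem backward_shock_compressive
    (γ ε₁ ε₂ ρl ρr ul ur σ : ℝ) (hγ : 1 < γ) (hε₁ : 0 < ε₁) (hε₂ : 0 < ε₂)
    (hρl : 2 * ε₁ < ρl) (hρr : 2 * ε₁ < ρr) (hne : ρl ≠ ρr)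
    (rh1 : -σ * (ρr - ρl) + ((ρr - 2 * ε₁) * ur - (ρl - 2 * ε₁) * ul) = 0)
    (rh2 : -σ * (ρr * ur - ρl * ul) +
      ((ρr - ε₁) * ur ^ 2 - (ρl - ε₁) * ul ^ 2 +
        ε₂ * (ρr ^ γ - ρl ^ γ) / γ) = 0)
    (lax1 : σ < ul - Real.sqrt (ε₂ * ρl ^ (γ - 2) * (ρl - 2 * ε₁)))
    (lax2 : ur - Real.sqrt (ε₂ * ρr ^ (γ - 2) * (ρr - 2 * ε₁)) < σ)
    (lax3 : σ < ur + Real.sqrt (ε₂ * ρr ^ (γ - 2) * (ρr - 2 * ε₁))) :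
    ρl < ρr ∧ ur < ul :=
  backward_shock_compressive_general γ ε₁ ε₂ ρl ρr ul ur σ hγ hε₁ hε₂ hρl hρr rh1 lax1 lax2 lax3
end

section
/- (Lemma 5.1) Let γ > 1, ρ₋, ρ₊ > 0 and u₋ > u₊. Let (ε₁ⁿ), (ε₂ⁿ) be sequences of positive numbers tending to 0, and for each n let ρ*ⁿ > max(ρ₋,ρ₊) and u*ⁿ ∈ ℝ satisfy ρ₋ρ*ⁿ − ε₁ⁿ(ρ₋ + ρ*ⁿ) > 0, ρ₊ρ*ⁿ − ε₁ⁿ(ρ₊ + ρ*ⁿ) > 0, together with the two-shock relations u*ⁿ − u₋ = −√( ε₂ⁿ(ρ*ⁿ − ρ₋)((ρ*ⁿ)^γ − ρ₋^γ) / (γ(ρ₋ρ*ⁿ − ε₁ⁿ(ρ₋ + ρ*ⁿ))) ) and u₊ − u*ⁿ = −√( ε₂ⁿ(ρ*ⁿ − ρ₊)((ρ*ⁿ)^γ − ρ₊^γ) / (γ(ρ₊ρ*ⁿ − ε₁ⁿ(ρ₊ + ρ*ⁿ))) ). Then ρ*ⁿ → +∞ as n → ∞. -/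
/-!
Adding the two shock relations gives `u₋ - u₊ = √A + √B`, where `A` and `B` are the squared
velocity jumps across the two shocks. For `ρ*` in a bounded range `[ρ±, M]` the denominators
stay above `γ ρ±² / 2` once `ε₁` is small, so both radicands are `O(ε₂)` uniformly in `ρ*`.
Hence a bounded `ρ*ⁿ` would eventually make `√A + √B < u₋ - u₊`.
-/

open Filter Set Topology

/-- The squared velocity jump across a shock joining densities `ρ` and `r`. -/
noncomputable def shockJumpSq (γ ε₁ ε₂ ρ r : ℝ) : ℝ :=
  ε₂ * (r - ρ) * (r ^ γ - ρ ^ γ) / (γ * (ρ * r - ε₁ * (ρ + r)))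

lemma abs_shockJumpSq_le {γ ε₁ ε₂ ρ r M : ℝ} (hγ : 0 < γ) (hρ : 0 < ρ) (hε₁ : 0 ≤ ε₁)
    (hε₂ : 0 ≤ ε₂) (hε₁M : ε₁ * (ρ + M) ≤ ρ ^ 2 / 2) (hr : r ∈ Icc ρ M) :
    |shockJumpSq γ ε₁ ε₂ ρ r| ≤ ε₂ * (M * M ^ γ / (γ * (ρ ^ 2 / 2))) := by
  obtain ⟨hρr, hrM⟩ := hr
  have hM : 0 < M := by linarith
  have hdenom : ρ ^ 2 / 2 ≤ ρ * r - ε₁ * (ρ + r) := by nlinarith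
  have hpow : ρ ^ γ ≤ r ^ γ := Real.rpow_le_rpow hρ.le hρr hγ.le
  have hpowM : r ^ γ ≤ M ^ γ := Real.rpow_le_rpow (hρ.trans_le hρr).le hrM hγ.le
  have hnum : 0 ≤ ε₂ * (r - ρ) * (r ^ γ - ρ ^ γ) :=
    mul_nonneg (mul_nonneg hε₂ (by linarith)) (by linarith)
  have hnumM : ε₂ * (r - ρ) * (r ^ γ - ρ ^ γ) ≤ ε₂ * M * M ^ γ := by
    have hργ : 0 ≤ ρ ^ γ := Real.rpow_nonneg hρ.le γ
    gcongr <;> linarith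
  rw [shockJumpSq, abs_of_nonneg (div_nonneg hnum (mul_nonneg hγ.le (by nlinarith))),
    ← mul_div_assoc, ← mul_assoc]
  exact div_le_div₀ (hnum.trans hnumM) hnumM (by positivity) (by gcongr)

theorem tendstoUniformlyOn_shockJumpSq {ι : Type*} {l : Filter ι} {γ ρ M : ℝ} {ε₁ ε₂ : ι → ℝ}
    (hγ : 0 < γ) (hρ : 0 < ρ) (hε₁nonneg : ∀ i, 0 ≤ ε₁ i) (hε₂nonneg : ∀ i, 0 ≤ ε₂ i)
    (hε₁ : Tendsto ε₁ l (𝓝 0)) (hε₂ : Tendsto ε₂ l (𝓝 0)) :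
    TendstoUniformlyOn (fun i r => shockJumpSq γ (ε₁ i) (ε₂ i) ρ r) 0 l (Icc ρ M) := by
  rw [Metric.tendstoUniformlyOn_iff]
  intro δ hδ
  have hsmall₁ : ∀ᶠ i in l, ε₁ i * (ρ + M) < ρ ^ 2 / 2 :=
    (hε₁.mul_const (ρ + M)).eventually_lt_const (by rw [zero_mul]; positivity)
  have hsmall₂ : ∀ᶠ i in l, ε₂ i * (M * M ^ γ / (γ * (ρ ^ 2 / 2))) < δ :=
    (hε₂.mul_const _).eventually_lt_const (by rwa [zero_mul])
  filter_upwards [hsmall₁, hsmall₂] with i h₁ h₂ r hr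
  rw [Pi.zero_apply, dist_zero_left, Real.norm_eq_abs]
  exact (abs_shockJumpSq_le hγ hρ (hε₁nonneg i) (hε₂nonneg i) h₁.le hr).trans_lt h₂

theorem intermediate_density_blow_up_general
    (γ ρm ρp um up : ℝ) (hγ : 1 < γ) (hρm : 0 < ρm) (hρp : 0 < ρp)
    (hu : up < um)
    (ε₁ ε₂ ρs us : ℕ → ℝ)
    (hε₁pos : ∀ n, 0 < ε₁ n) (hε₂pos : ∀ n, 0 < ε₂ n)
    (hε₁ : Filter.Tendsto ε₁ Filter.atTop (nhds 0))
    (hε₂ : Filter.Tendsto ε₂ Filter.atTop (nhds 0))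
    (hρs : ∀ n, max ρm ρp < ρs n)
    (hback : ∀ n, us n - um =
      -Real.sqrt (ε₂ n * (ρs n - ρm) * ((ρs n) ^ γ - ρm ^ γ) /
        (γ * (ρm * ρs n - ε₁ n * (ρm + ρs n)))))
    (hforw : ∀ n, up - us n =
      -Real.sqrt (ε₂ n * (ρs n - ρp) * ((ρs n) ^ γ - ρp ^ γ) /
        (γ * (ρp * ρs n - ε₁ n * (ρp + ρs n))))) :
    Filter.Tendsto ρs Filter.atTop Filter.atTop := by
  have hjump (n : ℕ) : um - up = √(shockJumpSq γ (ε₁ n) (ε₂ n) ρm (ρs n))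
      + √(shockJumpSq γ (ε₁ n) (ε₂ n) ρp (ρs n)) := by
    rw [shockJumpSq, shockJumpSq]
    linarith [hback n, hforw n]
  have hhalf : 0 < (um - up) / 2 := by linarith
  have hsmall {ρ : ℝ} (hρ : 0 < ρ) (b : ℝ) : ∀ᶠ n in atTop, ∀ r ∈ Icc ρ b,
      √(shockJumpSq γ (ε₁ n) (ε₂ n) ρ r) < (um - up) / 2 := by
    have hunif := tendstoUniformlyOn_shockJumpSq (M := b) (zero_lt_one.trans hγ) hρ
      (fun n => (hε₁pos n).le) (fun n => (hε₂pos n).le) hε₁ hε₂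
    filter_upwards [Metric.tendstoUniformlyOn_iff.1 hunif _ (pow_pos hhalf 2)] with n hn r hr
    rw [Real.sqrt_lt' hhalf]
    exact (le_abs_self _).trans_lt (by simpa using hn r hr)
  refine tendsto_atTop.2 fun b => ?_
  filter_upwards [hsmall hρm b, hsmall hρp b] with n hm hp
  by_contra! hlt
  have hback_small := hm (ρs n) ⟨(le_max_left ρm ρp).trans (hρs n).le, hlt.le⟩
  have hforw_small := hp (ρs n) ⟨(le_max_right ρm ρp).trans (hρs n).le, hlt.le⟩
  linarith [hjump n]

/-- Lemma 5.1: the intermediate density of the two-shock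
Riemann solution blows up as the flux-perturbation parameters vanish. -/
theorem intermediate_density_blow_up
    (γ ρm ρp um up : ℝ) (hγ : 1 < γ) (hρm : 0 < ρm) (hρp : 0 < ρp)
    (hu : up < um)
    (ε₁ ε₂ ρs us : ℕ → ℝ)
    (hε₁pos : ∀ n, 0 < ε₁ n) (hε₂pos : ∀ n, 0 < ε₂ n)
    (hε₁ : Filter.Tendsto ε₁ Filter.atTop (nhds 0))
    (hε₂ : Filter.Tendsto ε₂ Filter.atTop (nhds 0))
    (hρs : ∀ n, max ρm ρp < ρs n)
    (hd1 : ∀ n, 0 < ρm * ρs n - ε₁ n * (ρm + ρs n))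
    (hd2 : ∀ n, 0 < ρp * ρs n - ε₁ n * (ρp + ρs n))
    (hback : ∀ n, us n - um =
      -Real.sqrt (ε₂ n * (ρs n - ρm) * ((ρs n) ^ γ - ρm ^ γ) /
        (γ * (ρm * ρs n - ε₁ n * (ρm + ρs n)))))
    (hforw : ∀ n, up - us n =
      -Real.sqrt (ε₂ n * (ρs n - ρp) * ((ρs n) ^ γ - ρp ^ γ) /
        (γ * (ρp * ρs n - ε₁ n * (ρp + ρs n))))) :
    Filter.Tendsto ρs Filter.atTop Filter.atTop :=
  intermediate_density_blow_up_general γ ρm ρp um up hγ hρm hρp hu ε₁ ε₂ ρs us hε₁pos hε₂pos hε₁ hε₂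
    hρs hback hforw
end

section
/- (Lemma 5.2) Let γ > 1, ρ₋, ρ₊ > 0 and u₋ > u₊. Let (ε₁ⁿ), (ε₂ⁿ) be positive sequences tending to 0 and, for each n, let ρ*ⁿ > max(ρ₋,ρ₊), u*ⁿ ∈ ℝ satisfy ρ₋ρ*ⁿ − ε₁ⁿ(ρ₋ + ρ*ⁿ) > 0, ρ₊ρ*ⁿ − ε₁ⁿ(ρ₊ + ρ*ⁿ) > 0, u*ⁿ − u₋ = −√( ε₂ⁿ(ρ*ⁿ − ρ₋)((ρ*ⁿ)^γ − ρ₋^γ) / (γ(ρ₋ρ*ⁿ − ε₁ⁿ(ρ₋ + ρ*ⁿ))) ) and u₊ − u*ⁿ = −√( ε₂ⁿ(ρ*ⁿ − ρ₊)((ρ*ⁿ)^γ − ρ₊^γ) / (γ(ρ₊ρ*ⁿ − ε₁ⁿ(ρ₊ + ρ*ⁿ))) ). Then ε₂ⁿ(ρ*ⁿ)^γ → γρ₋ρ₊((u₋ − u₊)/(√ρ₋ + √ρ₊))² as n → ∞. -/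
/-!
Write `P = ε₂ ρ*^γ` and `t± = ρ±/ρ*`. The squared speed jump across each shock factors as
`P · r(ε₁, t±)` with `r(ε, t) = (1 - t)(1 - t^γ) / (γ (ρ± - ε (1 + t)))`, so adding the two shock
relations gives `u₋ - u₊ = √P (√r₋ + √r₊)`. Once `ε₁` is small the ratios `r±` are bounded, hence
`P` is bounded below; as `ε₂ → 0` this forces `ρ* → ∞`, i.e. `t± → 0`, so `r± → (γ ρ±)⁻¹` and
`P → (u₋ - u₊)² / ((γ ρ₋)^{-1/2} + (γ ρ₊)^{-1/2})²`.
-/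

open Filter Real Topology

noncomputable def shockRatio (γ ρ₀ ε t : ℝ) : ℝ :=
  (1 - t) * (1 - t ^ γ) / (γ * (ρ₀ - ε * (1 + t)))

-- This holds also where the denominator vanishes: both sides are then `0` by `x / 0 = 0`.
lemma shock_sq_eq_mul_shockRatio {γ ρ₀ ε₁ ε₂ ρ : ℝ} (hρ₀ : 0 ≤ ρ₀) (hρ : 0 < ρ) :
    ε₂ * (ρ - ρ₀) * (ρ ^ γ - ρ₀ ^ γ) / (γ * (ρ₀ * ρ - ε₁ * (ρ₀ + ρ))) =
      ε₂ * ρ ^ γ * shockRatio γ ρ₀ ε₁ (ρ₀ / ρ) := by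
  have hργ : ρ ^ γ ≠ 0 := (rpow_pos_of_pos hρ γ).ne'
  have hden : ρ₀ - ε₁ * (1 + ρ₀ / ρ) = (ρ₀ * ρ - ε₁ * (ρ₀ + ρ)) / ρ := by
    field_simp
    ring
  rw [shockRatio, div_rpow hρ₀ hρ.le, hden, one_sub_div hρ.ne', one_sub_div hργ]
  field_simp

lemma shockRatio_mem_Ioc {γ ρ₀ ε t : ℝ} (hγ : 0 < γ) (hρ₀ : 0 < ρ₀) (hε : 0 ≤ ε)
    (hερ₀ : ε ≤ ρ₀ / 4) (ht₀ : 0 ≤ t) (ht₁ : t < 1) :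
    shockRatio γ ρ₀ ε t ∈ Set.Ioc 0 (2 / (γ * ρ₀)) := by
  have htγ : t ^ γ < 1 := rpow_lt_one ht₀ ht₁ hγ
  have htγ₀ : 0 ≤ t ^ γ := rpow_nonneg ht₀ γ
  have hden : γ * ρ₀ / 2 ≤ γ * (ρ₀ - ε * (1 + t)) := by
    have : ε * (1 + t) ≤ ρ₀ / 2 := by nlinarith
    nlinarith
  have hnum : (1 - t) * (1 - t ^ γ) ≤ 1 := by nlinarith
  refine ⟨div_pos (by nlinarith) (lt_of_lt_of_le (by positivity) hden), ?_⟩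
  calc shockRatio γ ρ₀ ε t ≤ 1 / (γ * ρ₀ / 2) :=
        div_le_div₀ zero_le_one hnum (by positivity) hden
    _ = 2 / (γ * ρ₀) := by field_simp

lemma eventually_shockRatio_mem_Ioc {ι : Type*} {l : Filter ι} {γ ρ₀ : ℝ} {ε ρ : ι → ℝ}
    (hγ : 0 < γ) (hρ₀ : 0 < ρ₀) (hε₀ : ∀ i, 0 ≤ ε i) (hε : Tendsto ε l (𝓝 0))
    (hρ : ∀ i, ρ₀ < ρ i) :
    ∀ᶠ i in l, shockRatio γ ρ₀ (ε i) (ρ₀ / ρ i) ∈ Set.Ioc 0 (2 / (γ * ρ₀)) := by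
  filter_upwards [hε.eventually (ge_mem_nhds (by positivity : 0 < ρ₀ / 4))] with i hi
  have hρi : 0 < ρ i := hρ₀.trans (hρ i)
  exact shockRatio_mem_Ioc hγ hρ₀ (hε₀ i) hi (div_pos hρ₀ hρi).le ((div_lt_one hρi).2 (hρ i))

lemma tendsto_shockRatio {ι : Type*} {l : Filter ι} {γ ρ₀ : ℝ} {ε t : ι → ℝ} (hγ : 0 < γ)
    (hρ₀ : ρ₀ ≠ 0) (hε : Tendsto ε l (𝓝 0)) (ht : Tendsto t l (𝓝 0)) :
    Tendsto (fun i => shockRatio γ ρ₀ (ε i) (t i)) l (𝓝 (γ * ρ₀)⁻¹) := by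
  have htγ : Tendsto (fun i => t i ^ γ) l (𝓝 0) := by
    have := (continuousAt_rpow_const 0 γ (Or.inr hγ.le)).tendsto.comp ht
    rwa [zero_rpow hγ.ne'] at this
  have hnum : Tendsto (fun i => (1 - t i) * (1 - t i ^ γ)) l (𝓝 ((1 - 0) * (1 - 0))) :=
    (tendsto_const_nhds.sub ht).mul (tendsto_const_nhds.sub htγ)
  have hden : Tendsto (fun i => γ * (ρ₀ - ε i * (1 + t i))) l (𝓝 (γ * (ρ₀ - 0 * (1 + 0)))) :=
    tendsto_const_nhds.mul (tendsto_const_nhds.sub (hε.mul (tendsto_const_nhds.add ht)))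
  rw [show (γ * ρ₀)⁻¹ = (1 - 0) * (1 - 0) / (γ * (ρ₀ - 0 * (1 + 0))) by simp]
  exact hnum.div hden (by simp [hγ.ne', hρ₀])

lemma tendsto_atTop_of_le_mul_rpow {ι : Type*} {l : Filter ι} {γ c : ℝ} {ε ρ : ι → ℝ}
    (hγ : 0 < γ) (hc : 0 < c) (hρ : ∀ i, 0 ≤ ρ i) (hε : Tendsto ε l (𝓝[>] 0))
    (hle : ∀ᶠ i in l, c ≤ ε i * ρ i ^ γ) : Tendsto ρ l atTop := by
  have hε_pos : ∀ᶠ i in l, 0 < ε i := (tendsto_nhdsWithin_iff.1 hε).2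
  have hργ : Tendsto (fun i => ρ i ^ γ) l atTop := by
    refine tendsto_atTop_mono' l ?_ (hε.inv_tendsto_nhdsGT_zero.const_mul_atTop hc)
    filter_upwards [hle, hε_pos] with i hi hεi
    rw [Pi.inv_apply, ← div_eq_mul_inv, div_le_iff₀ hεi]
    linarith
  refine ((tendsto_rpow_atTop (inv_pos.2 hγ)).comp hργ).congr fun i => ?_
  exact rpow_rpow_inv (hρ i) hγ.ne'

lemma eq_sq_div_sq_of_eq_sqrt_mul_add_sqrt_mul {P a b D : ℝ} (hP : 0 ≤ P) (hD : D ≠ 0)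
    (h : D = √(P * a) + √(P * b)) : P = D ^ 2 / (√a + √b) ^ 2 := by
  rw [sqrt_mul hP, sqrt_mul hP, ← mul_add] at h
  have hsum : √a + √b ≠ 0 := right_ne_zero_of_mul (h ▸ hD)
  rw [h, mul_pow, sq_sqrt hP, mul_div_cancel_right₀ _ (pow_ne_zero 2 hsum)]

lemma sq_div_sq_sqrt_inv_add_sqrt_inv {γ a b : ℝ} (hγ : 0 < γ) (ha : 0 < a) (hb : 0 < b)
    (D : ℝ) : D ^ 2 / (√(γ * a)⁻¹ + √(γ * b)⁻¹) ^ 2 = γ * a * b * (D / (√a + √b)) ^ 2 := by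
  have : 0 < √a := sqrt_pos.2 ha
  have : 0 < √b := sqrt_pos.2 hb
  have : 0 < √γ := sqrt_pos.2 hγ
  have hsum : √(γ * a)⁻¹ + √(γ * b)⁻¹ = (√a + √b) / (√γ * √a * √b) := by
    rw [sqrt_inv, sqrt_inv, sqrt_mul hγ.le, sqrt_mul hγ.le]
    field_simp
    ring
  rw [hsum, div_pow, mul_pow, mul_pow, sq_sqrt hγ.le, sq_sqrt ha.le, sq_sqrt hb.le]
  field_simp

theorem intermediate_pressure_limit_general
    (γ ρm ρp um up : ℝ) (hγ : 1 < γ) (hρm : 0 < ρm) (hρp : 0 < ρp)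
    (hu : up < um)
    (ε₁ ε₂ ρs us : ℕ → ℝ)
    (hε₁pos : ∀ n, 0 < ε₁ n) (hε₂pos : ∀ n, 0 < ε₂ n)
    (hε₁ : Filter.Tendsto ε₁ Filter.atTop (nhds 0))
    (hε₂ : Filter.Tendsto ε₂ Filter.atTop (nhds 0))
    (hρs : ∀ n, max ρm ρp < ρs n)
    (hback : ∀ n, us n - um =
      -Real.sqrt (ε₂ n * (ρs n - ρm) * ((ρs n) ^ γ - ρm ^ γ) /
        (γ * (ρm * ρs n - ε₁ n * (ρm + ρs n)))))
    (hforw : ∀ n, up - us n =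
      -Real.sqrt (ε₂ n * (ρs n - ρp) * ((ρs n) ^ γ - ρp ^ γ) /
        (γ * (ρp * ρs n - ε₁ n * (ρp + ρs n))))) :
    Filter.Tendsto (fun n => ε₂ n * (ρs n) ^ γ) Filter.atTop
      (nhds (γ * ρm * ρp *
        ((um - up) / (Real.sqrt ρm + Real.sqrt ρp)) ^ 2)) := by
  have hγ₀ : 0 < γ := by linarith
  have hρsm n : ρm < ρs n := (le_max_left _ _).trans_lt (hρs n)
  have hρsp n : ρp < ρs n := (le_max_right _ _).trans_lt (hρs n)
  have hρs₀ n : 0 < ρs n := hρm.trans (hρsm n)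
  set rm := fun n => shockRatio γ ρm (ε₁ n) (ρm / ρs n)
  set rp := fun n => shockRatio γ ρp (ε₁ n) (ρp / ρs n)
  have hP n : ε₂ n * ρs n ^ γ = (um - up) ^ 2 / (√(rm n) + √(rp n)) ^ 2 := by
    refine eq_sq_div_sq_of_eq_sqrt_mul_add_sqrt_mul
      (mul_pos (hε₂pos n) (rpow_pos_of_pos (hρs₀ n) γ)).le (sub_pos.2 hu).ne' ?_
    rw [← shock_sq_eq_mul_shockRatio hρm.le (hρs₀ n), ← shock_sq_eq_mul_shockRatio hρp.le (hρs₀ n)]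
    linarith [hback n, hforw n]
  have hρs_top : Tendsto ρs atTop atTop := by
    refine tendsto_atTop_of_le_mul_rpow hγ₀ (c := (um - up) ^ 2 / (√(2 / (γ * ρm)) +
      √(2 / (γ * ρp))) ^ 2) (div_pos (pow_pos (sub_pos.2 hu) 2) (by positivity))
      (fun n => (hρs₀ n).le) (tendsto_nhdsWithin_iff.2 ⟨hε₂, .of_forall hε₂pos⟩) ?_
    filter_upwards [eventually_shockRatio_mem_Ioc hγ₀ hρm (fun n => (hε₁pos n).le) hε₁ hρsm,
      eventually_shockRatio_mem_Ioc hγ₀ hρp (fun n => (hε₁pos n).le) hε₁ hρsp] with n ⟨hm₀, hm⟩ hp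
    rw [hP n]
    have : 0 < √(rm n) + √(rp n) := add_pos_of_pos_of_nonneg (sqrt_pos.2 hm₀) (sqrt_nonneg _)
    gcongr
    exact hp.2
  have hrm : Tendsto rm atTop (𝓝 (γ * ρm)⁻¹) :=
    tendsto_shockRatio hγ₀ hρm.ne' hε₁ (tendsto_const_nhds.div_atTop hρs_top)
  have hrp : Tendsto rp atTop (𝓝 (γ * ρp)⁻¹) :=
    tendsto_shockRatio hγ₀ hρp.ne' hε₁ (tendsto_const_nhds.div_atTop hρs_top)
  rw [← sq_div_sq_sqrt_inv_add_sqrt_inv hγ₀ hρm hρp, funext hP]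
  exact tendsto_const_nhds.div ((hrm.sqrt.add hrp.sqrt).pow 2) (by positivity)

/-- Lemma 5.2: the scaled pressure ε₂ⁿ(ρ*ⁿ)^γ of the
intermediate state converges to γρ₋ρ₊((u₋−u₊)/(√ρ₋+√ρ₊))². -/
theorem intermediate_pressure_limit
    (γ ρm ρp um up : ℝ) (hγ : 1 < γ) (hρm : 0 < ρm) (hρp : 0 < ρp)
    (hu : up < um)
    (ε₁ ε₂ ρs us : ℕ → ℝ)
    (hε₁pos : ∀ n, 0 < ε₁ n) (hε₂pos : ∀ n, 0 < ε₂ n)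
    (hε₁ : Filter.Tendsto ε₁ Filter.atTop (nhds 0))
    (hε₂ : Filter.Tendsto ε₂ Filter.atTop (nhds 0))
    (hρs : ∀ n, max ρm ρp < ρs n)
    (hd1 : ∀ n, 0 < ρm * ρs n - ε₁ n * (ρm + ρs n))
    (hd2 : ∀ n, 0 < ρp * ρs n - ε₁ n * (ρp + ρs n))
    (hback : ∀ n, us n - um =
      -Real.sqrt (ε₂ n * (ρs n - ρm) * ((ρs n) ^ γ - ρm ^ γ) /
        (γ * (ρm * ρs n - ε₁ n * (ρm + ρs n)))))
    (hforw : ∀ n, up - us n =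
      -Real.sqrt (ε₂ n * (ρs n - ρp) * ((ρs n) ^ γ - ρp ^ γ) /
        (γ * (ρp * ρs n - ε₁ n * (ρp + ρs n))))) :
    Filter.Tendsto (fun n => ε₂ n * (ρs n) ^ γ) Filter.atTop
      (nhds (γ * ρm * ρp *
        ((um - up) / (Real.sqrt ρm + Real.sqrt ρp)) ^ 2)) :=
  intermediate_pressure_limit_general γ ρm ρp um up hγ hρm hρp hu ε₁ ε₂ ρs us hε₁pos hε₂pos hε₁ hε₂
    hρs hback hforw
end

section
/- (Lemma 5.3) Let γ > 1, ρ₋, ρ₊ > 0, u₋ > u₊ and set σ = (√ρ₋ u₋ + √ρ₊ u₊)/(√ρ₋ + √ρ₊). Let (ε₁ⁿ), (ε₂ⁿ) be positive sequences tending to 0 and, for each n, let ρ*ⁿ > max(ρ₋,ρ₊), u*ⁿ ∈ ℝ satisfy ρ₋ρ*ⁿ − ε₁ⁿ(ρ₋ + ρ*ⁿ) > 0, ρ₊ρ*ⁿ − ε₁ⁿ(ρ₊ + ρ*ⁿ) > 0, u*ⁿ − u₋ = −√( ε₂ⁿ(ρ*ⁿ − ρ₋)((ρ*ⁿ)^γ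 − ρ₋^γ) / (γ(ρ₋ρ*ⁿ − ε₁ⁿ(ρ₋ + ρ*ⁿ))) ), u₊ − u*ⁿ = −√( ε₂ⁿ(ρ*ⁿ − ρ₊)((ρ*ⁿ)^γ − ρ₊^γ) / (γ(ρ₊ρ*ⁿ − ε₁ⁿ(ρ₊ + ρ*ⁿ))) ), and define σ₁ⁿ = u*ⁿ + (ρ₋ − 2ε₁ⁿ)(u*ⁿ − u₋)/(ρ*ⁿ − ρ₋) and σ₂ⁿ = u*ⁿ + (ρ₊ − 2ε₁ⁿ)(u₊ − u*ⁿ)/(ρ₊ − ρ*ⁿ). Then u*ⁿ → σ, σ₁ⁿ → σ and σ₂ⁿ → σ as n → ∞. -/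
/-!
Put `s = u₋ - u*` and `t = u* - u₊`. Then `s, t > 0`, `s + t = u₋ - u₊`, and the Hugoniot
relations say `s² = ε₂ C(ρ₋)`, `t² = ε₂ C(ρ₊)` with `C(ρ) ~ ρ*^γ / (γ ρ)` as `ρ* → ∞`.
If `ρ*` stayed bounded along a subsequence, `s` and `t` would vanish there together with `ε₂`,
contradicting `s + t = u₋ - u₊ > 0`; hence `ρ* → ∞`. Then `t² / s² → ρ₋ / ρ₊`, which forces
`s → (u₋ - u₊) / (1 + √(ρ₋ / ρ₊))`, that is `u* → σ`. Both shock speeds differ from `u*`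
by `O(1 / ρ*)`.
-/

open Filter Topology

/-- The Hugoniot relation of the shock joining the state of density `ρ` to `ρ* = r` reads
`(u* - u)² = ε₂ * shockCoeff γ ρ ε₁ r`. -/
noncomputable def shockCoeff (γ ρ ε r : ℝ) : ℝ :=
  (r - ρ) * (r ^ γ - ρ ^ γ) / (γ * (ρ * r - ε * (ρ + r)))

section ShockCoeff

variable {γ ρ ε r : ℝ}

lemma mul_shockCoeff (a : ℝ) :
    a * shockCoeff γ ρ ε r = a * (r - ρ) * (r ^ γ - ρ ^ γ) / (γ * (ρ * r - ε * (ρ + r))) := by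
  rw [shockCoeff, ← mul_div_assoc, ← mul_assoc]

lemma shockCoeff_pos (hγ : 0 < γ) (hρ : 0 < ρ) (hr : ρ < r)
    (hd : 0 < ρ * r - ε * (ρ + r)) : 0 < shockCoeff γ ρ ε r :=
  div_pos (mul_pos (sub_pos.2 hr) (sub_pos.2 (Real.rpow_lt_rpow hρ.le hr hγ)))
    (mul_pos hγ hd)

lemma mul_sub_two_mul_le (hε : ε ≤ ρ) (hr : ρ ≤ r) :
    ρ * (ρ - 2 * ε) ≤ ρ * r - ε * (ρ + r) := by
  nlinarith [mul_nonneg (sub_nonneg.2 hε) (sub_nonneg.2 hr)]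

lemma shockCoeff_le (hγ : 0 < γ) (hρ : 0 < ρ) (hε : 2 * ε < ρ) (hr : ρ < r) {B : ℝ}
    (hrB : r ≤ B) :
    shockCoeff γ ρ ε r ≤ (B - ρ) * (B ^ γ - ρ ^ γ) / (γ * (ρ * (ρ - 2 * ε))) := by
  have hpow : r ^ γ - ρ ^ γ ≤ B ^ γ - ρ ^ γ :=
    sub_le_sub_right (Real.rpow_le_rpow (hρ.le.trans hr.le) hrB hγ.le) _
  refine div_le_div₀ ?_ ?_ (mul_pos hγ (mul_pos hρ (by linarith))) ?_
  · exact mul_nonneg (by linarith) (by linarith [Real.rpow_lt_rpow hρ.le hr hγ])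
  · exact mul_le_mul (by linarith) hpow
      (sub_nonneg.2 (Real.rpow_lt_rpow hρ.le hr hγ).le) (by linarith)
  · exact mul_le_mul_of_nonneg_left (mul_sub_two_mul_le (by linarith) hr.le) hγ.le

lemma shockCoeff_mul_div_rpow (hr : 0 < r) :
    shockCoeff γ ρ ε r * ρ / r ^ γ =
      (1 - ρ * r⁻¹) * (1 - ρ ^ γ * (r ^ γ)⁻¹) * ρ / (γ * (ρ - ε * (ρ * r⁻¹ + 1))) := by
  have hrγ : r ^ γ ≠ 0 := (Real.rpow_pos_of_pos hr γ).ne'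
  rw [show ρ - ε * (ρ * r⁻¹ + 1) = (ρ * r - ε * (ρ + r)) / r by field_simp]
  by_cases hd : ρ * r - ε * (ρ + r) = 0
  · -- both sides are `0` by the convention `x / 0 = 0`
    simp [shockCoeff, hd]
  · unfold shockCoeff
    field_simp

lemma tendsto_shockCoeff_mul_div_rpow (hγ : 0 < γ) (hρ : 0 < ρ) :
    Tendsto (fun p : ℝ × ℝ => shockCoeff γ ρ p.1 p.2 * ρ / p.2 ^ γ) (𝓝 0 ×ˢ atTop)
      (𝓝 γ⁻¹) := by
  have hinv : Tendsto (fun p : ℝ × ℝ => p.2⁻¹) (𝓝 0 ×ˢ atTop) (𝓝 0) :=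
    tendsto_inv_atTop_zero.comp tendsto_snd
  have hinvγ : Tendsto (fun p : ℝ × ℝ => (p.2 ^ γ)⁻¹) (𝓝 0 ×ˢ atTop) (𝓝 0) :=
    tendsto_inv_atTop_zero.comp ((tendsto_rpow_atTop hγ).comp tendsto_snd)
  have hlim := ((((tendsto_const_nhds (x := 1)).sub (hinv.const_mul ρ)).mul
    ((tendsto_const_nhds (x := 1)).sub (hinvγ.const_mul (ρ ^ γ)))).mul_const ρ).div
    (((tendsto_const_nhds (x := ρ)).sub
      (tendsto_fst.mul ((hinv.const_mul ρ).add_const 1))).const_mul γ)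
    (by simp [hγ.ne', hρ.ne'])
  simp only [mul_zero, sub_zero, one_mul, zero_add, zero_mul] at hlim
  rw [show γ⁻¹ = ρ / (γ * ρ) by field_simp]
  refine hlim.congr' ?_
  filter_upwards [tendsto_snd.eventually (eventually_gt_atTop 0)] with p hp
  exact (shockCoeff_mul_div_rpow hp).symm

lemma tendsto_shockCoeff_div_shockCoeff (hγ : 0 < γ) {ρ' : ℝ} (hρ : 0 < ρ) (hρ' : 0 < ρ') :
    Tendsto (fun p : ℝ × ℝ => shockCoeff γ ρ' p.1 p.2 / shockCoeff γ ρ p.1 p.2)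
      (𝓝 0 ×ˢ atTop) (𝓝 (ρ / ρ')) := by
  have hlim := ((tendsto_shockCoeff_mul_div_rpow hγ hρ').div
    (tendsto_shockCoeff_mul_div_rpow hγ hρ) (inv_ne_zero hγ.ne')).mul_const (ρ / ρ')
  rw [div_self (inv_ne_zero hγ.ne'), one_mul] at hlim
  refine hlim.congr' ?_
  filter_upwards [tendsto_snd.eventually (eventually_gt_atTop 0)] with p hp
  have hrγ : p.2 ^ γ ≠ 0 := (Real.rpow_pos_of_pos hp γ).ne'
  by_cases hC : shockCoeff γ ρ p.1 p.2 = 0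
  · simp [hC]
  · simp only [Pi.div_apply]
    field_simp

end ShockCoeff

section Limits

variable {ι : Type*} {l : Filter ι} {γ : ℝ} {ε₁ ε₂ r : ι → ℝ}

lemma tendsto_mul_shockCoeff_inf_principal_le (hγ : 0 < γ) {ρ : ℝ} (hρ : 0 < ρ)
    (hε₁ : Tendsto ε₁ l (𝓝 0)) (hε₂ : Tendsto ε₂ l (𝓝 0)) (hε₂pos : ∀ i, 0 ≤ ε₂ i)
    (hr : ∀ i, ρ < r i) (B : ℝ) :
    Tendsto (fun i => ε₂ i * shockCoeff γ ρ (ε₁ i) (r i)) (l ⊓ 𝓟 {i | r i ≤ B}) (𝓝 0) := by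
  set K : ℝ → ℝ := fun ε => (B - ρ) * (B ^ γ - ρ ^ γ) / (γ * (ρ * (ρ - 2 * ε)))
  have hK : Tendsto (fun i => ε₂ i * K (ε₁ i)) l (𝓝 0) := by
    have hKcont : ContinuousAt K 0 :=
      continuousAt_const.div (continuousAt_const.mul (continuousAt_const.mul
        (continuousAt_const.sub (continuousAt_id.const_mul 2)))) (by simp [hγ.ne', hρ.ne'])
    simpa using hε₂.mul (hKcont.tendsto.comp hε₁)
  have hsmall : ∀ᶠ i in l, 2 * ε₁ i < ρ := by
    simpa using (hε₁.const_mul 2).eventually (gt_mem_nhds (by rwa [mul_zero]))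
  refine tendsto_of_tendsto_of_tendsto_of_le_of_le' tendsto_const_nhds
    (hK.mono_left inf_le_left) ?_ ?_
  · filter_upwards [hsmall.filter_mono inf_le_left] with i hi
    exact mul_nonneg (hε₂pos i) (shockCoeff_pos hγ hρ (hr i)
      ((mul_pos hρ (by linarith)).trans_le (mul_sub_two_mul_le (by linarith) (hr i).le))).le
  · filter_upwards [hsmall.filter_mono inf_le_left, mem_inf_of_right (mem_principal_self _)]
      with i hi hiB
    exact mul_le_mul_of_nonneg_left (shockCoeff_le hγ hρ hi (hr i) hiB) (hε₂pos i)

lemma tendsto_atTop_of_sqrt_add_sqrt_eq (hγ : 0 < γ) {ρm ρp c : ℝ} (hρm : 0 < ρm) (hρp : 0 < ρp)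
    (hε₁ : Tendsto ε₁ l (𝓝 0)) (hε₂ : Tendsto ε₂ l (𝓝 0)) (hε₂pos : ∀ i, 0 ≤ ε₂ i)
    (hrm : ∀ i, ρm < r i) (hrp : ∀ i, ρp < r i) (hc : c ≠ 0)
    (hsum : ∀ i, √(ε₂ i * shockCoeff γ ρm (ε₁ i) (r i)) +
      √(ε₂ i * shockCoeff γ ρp (ε₁ i) (r i)) = c) :
    Tendsto r l atTop := by
  refine tendsto_atTop.2 fun B => ?_
  have hbot : l ⊓ 𝓟 {i | r i ≤ B} = ⊥ := by
    by_contra hne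
    have := NeBot.mk hne
    have h := (tendsto_mul_shockCoeff_inf_principal_le hγ hρm hε₁ hε₂ hε₂pos hrm B).sqrt.add
      (tendsto_mul_shockCoeff_inf_principal_le hγ hρp hε₁ hε₂ hε₂pos hrp B).sqrt
    simp only [hsum, Real.sqrt_zero, add_zero] at h
    exact hc (tendsto_nhds_unique tendsto_const_nhds h)
  filter_upwards [inf_principal_eq_bot.1 hbot] with i (hi : ¬r i ≤ B)
  exact (not_le.1 hi).le

lemma tendsto_sqrt_of_sqrt_add_sqrt_eq {a b : ι → ℝ} {c q : ℝ} (ha : ∀ i, 0 < a i)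
    (hsum : ∀ i, √(a i) + √(b i) = c) (hq : Tendsto (fun i => b i / a i) l (𝓝 q)) :
    Tendsto (fun i => √(a i)) l (𝓝 (c / (1 + √q))) := by
  have hsplit : ∀ i, √(a i) = c / (1 + √(b i / a i)) := by
    intro i
    have hsa : 0 < √(a i) := Real.sqrt_pos.2 (ha i)
    rw [Real.sqrt_div' _ (ha i).le, ← hsum i]
    field_simp
  simp only [hsplit]
  exact tendsto_const_nhds.div (tendsto_const_nhds.add hq.sqrt) (by positivity)

lemma tendsto_add_div_sub_const {u N r : ι → ℝ} {σ a : ℝ} (hu : Tendsto u l (𝓝 σ))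
    (hN : Tendsto N l (𝓝 a)) (hr : Tendsto r l atTop) (ρ : ℝ) :
    Tendsto (fun i => u i + N i / (r i - ρ)) l (𝓝 σ) := by
  simpa [sub_eq_add_neg] using hu.add (hN.div_atTop (tendsto_atTop_add_const_right l (-ρ) hr))

end Limits

theorem shock_speeds_limit_general
    (γ ρm ρp um up σ : ℝ) (hγ : 1 < γ) (hρm : 0 < ρm) (hρp : 0 < ρp)
    (hu : up < um)
    (hσ : σ = (Real.sqrt ρm * um + Real.sqrt ρp * up) /
      (Real.sqrt ρm + Real.sqrt ρp))
    (ε₁ ε₂ ρs us σ₁ σ₂ : ℕ → ℝ)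
    (hε₂pos : ∀ n, 0 < ε₂ n)
    (hε₁ : Filter.Tendsto ε₁ Filter.atTop (nhds 0))
    (hε₂ : Filter.Tendsto ε₂ Filter.atTop (nhds 0))
    (hρs : ∀ n, max ρm ρp < ρs n)
    (hd1 : ∀ n, 0 < ρm * ρs n - ε₁ n * (ρm + ρs n))
    (hback : ∀ n, us n - um =
      -Real.sqrt (ε₂ n * (ρs n - ρm) * ((ρs n) ^ γ - ρm ^ γ) /
        (γ * (ρm * ρs n - ε₁ n * (ρm + ρs n)))))
    (hforw : ∀ n, up - us n =
      -Real.sqrt (ε₂ n * (ρs n - ρp) * ((ρs n) ^ γ - ρp ^ γ) /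
        (γ * (ρp * ρs n - ε₁ n * (ρp + ρs n)))))
    (hσ₁ : ∀ n, σ₁ n = us n + (ρm - 2 * ε₁ n) * (us n - um) / (ρs n - ρm))
    (hσ₂ : ∀ n, σ₂ n = us n + (ρp - 2 * ε₁ n) * (up - us n) / (ρp - ρs n)) :
    Filter.Tendsto us Filter.atTop (nhds σ) ∧
    Filter.Tendsto σ₁ Filter.atTop (nhds σ) ∧
    Filter.Tendsto σ₂ Filter.atTop (nhds σ) := by
  have hγ0 : 0 < γ := zero_lt_one.trans hγ
  have hρsm n : ρm < ρs n := (le_max_left _ _).trans_lt (hρs n)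
  have hρsp n : ρp < ρs n := (le_max_right _ _).trans_lt (hρs n)
  simp only [← mul_shockCoeff] at hback hforw
  have hsum n : √(ε₂ n * shockCoeff γ ρm (ε₁ n) (ρs n)) +
      √(ε₂ n * shockCoeff γ ρp (ε₁ n) (ρs n)) = um - up := by
    linarith [hback n, hforw n]
  have hρs_atTop : Tendsto ρs atTop atTop :=
    tendsto_atTop_of_sqrt_add_sqrt_eq hγ0 hρm hρp hε₁ hε₂ (fun n => (hε₂pos n).le) hρsm hρsp
      (sub_pos.2 hu).ne' hsum
  have hratio : Tendsto (fun n => ε₂ n * shockCoeff γ ρp (ε₁ n) (ρs n) /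
      (ε₂ n * shockCoeff γ ρm (ε₁ n) (ρs n))) atTop (𝓝 (ρm / ρp)) := by
    refine ((tendsto_shockCoeff_div_shockCoeff hγ0 hρm hρp).comp
      (hε₁.prodMk hρs_atTop)).congr fun n => ?_
    exact (mul_div_mul_left _ _ (hε₂pos n).ne').symm
  have hlim : um - (um - up) / (1 + √(ρm / ρp)) = σ := by
    have := Real.sqrt_pos.2 hρm
    have := Real.sqrt_pos.2 hρp
    rw [hσ, Real.sqrt_div' _ hρp.le]
    field_simp
    ring
  have hus : Tendsto us atTop (𝓝 σ) := by
    rw [← hlim]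
    refine (tendsto_const_nhds.sub (tendsto_sqrt_of_sqrt_add_sqrt_eq
      (fun n => mul_pos (hε₂pos n) (shockCoeff_pos hγ0 hρm (hρsm n) (hd1 n))) hsum hratio)).congr
      fun n => ?_
    linarith [hback n]
  have hN₁ := ((tendsto_const_nhds (x := ρm)).sub (hε₁.const_mul 2)).mul (hus.sub_const um)
  have hN₂ := (((tendsto_const_nhds (x := ρp)).sub (hε₁.const_mul 2)).mul (hus.const_sub up)).neg
  refine ⟨hus, ?_, ?_⟩
  · exact (tendsto_add_div_sub_const hus hN₁ hρs_atTop ρm).congr fun n => (hσ₁ n).symm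
  · refine (tendsto_add_div_sub_const hus hN₂ hρs_atTop ρp).congr fun n => ?_
    rw [hσ₂, ← neg_sub ρp (ρs n), neg_div_neg_eq]

/-- Lemma 5.3: the intermediate velocity and both shock
speeds of the two-shock Riemann solution converge to the delta-shock
speed σ as the flux-perturbation parameters vanish. -/
theorem shock_speeds_limit
    (γ ρm ρp um up σ : ℝ) (hγ : 1 < γ) (hρm : 0 < ρm) (hρp : 0 < ρp)
    (hu : up < um)
    (hσ : σ = (Real.sqrt ρm * um + Real.sqrt ρp * up) /
      (Real.sqrt ρm + Real.sqrt ρp))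
    (ε₁ ε₂ ρs us σ₁ σ₂ : ℕ → ℝ)
    (hε₁pos : ∀ n, 0 < ε₁ n) (hε₂pos : ∀ n, 0 < ε₂ n)
    (hε₁ : Filter.Tendsto ε₁ Filter.atTop (nhds 0))
    (hε₂ : Filter.Tendsto ε₂ Filter.atTop (nhds 0))
    (hρs : ∀ n, max ρm ρp < ρs n)
    (hd1 : ∀ n, 0 < ρm * ρs n - ε₁ n * (ρm + ρs n))
    (hd2 : ∀ n, 0 < ρp * ρs n - ε₁ n * (ρp + ρs n))
    (hback : ∀ n, us n - um =
      -Real.sqrt (ε₂ n * (ρs n - ρm) * ((ρs n) ^ γ - ρm ^ γ) /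
        (γ * (ρm * ρs n - ε₁ n * (ρm + ρs n)))))
    (hforw : ∀ n, up - us n =
      -Real.sqrt (ε₂ n * (ρs n - ρp) * ((ρs n) ^ γ - ρp ^ γ) /
        (γ * (ρp * ρs n - ε₁ n * (ρp + ρs n)))))
    (hσ₁ : ∀ n, σ₁ n = us n + (ρm - 2 * ε₁ n) * (us n - um) / (ρs n - ρm))
    (hσ₂ : ∀ n, σ₂ n = us n + (ρp - 2 * ε₁ n) * (up - us n) / (ρp - ρs n)) :
    Filter.Tendsto us Filter.atTop (nhds σ) ∧
    Filter.Tendsto σ₁ Filter.atTop (nhds σ) ∧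
    Filter.Tendsto σ₂ Filter.atTop (nhds σ) :=
  shock_speeds_limit_general γ ρm ρp um up σ hγ hρm hρp hu hσ ε₁ ε₂ ρs us σ₁ σ₂ hε₂pos hε₁ hε₂ hρs
    hd1 hback hforw hσ₁ hσ₂
end

section
/- (Lemma 5.4) Under the hypotheses of Lemma 5.3 (γ > 1, ρ₋, ρ₊ > 0, u₋ > u₊, positive sequences ε₁ⁿ, ε₂ⁿ → 0, intermediate states ρ*ⁿ > max(ρ₋,ρ₊), u*ⁿ satisfying the two shock-curve relations, and shock speeds σ₁ⁿ = u*ⁿ + (ρ₋ − 2ε₁ⁿ)(u*ⁿ − u₋)/(ρ*ⁿ − ρ₋), σ₂ⁿ = u*ⁿ + (ρ₊ − 2ε₁ⁿ)(u₊ − u*ⁿ)/(ρ₊ − ρ*ⁿ)), one has ρ*ⁿ(σ₂ⁿ − σ₁ⁿ) → σ(ρ₊ − ρ₋) − (ρ₊u₊ − ρ₋u₋) as n → ∞, where σ = (√ρ₋ u₋ + √ρ₊ u₊)/(√ρ₋ + √ρ₊). -/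
/-!
Write `A = u₋ - u*` and `B = u* - u₊`. The shock relations say `A = √F(ρ₋)`, `B = √F(ρ₊)` with
`F(a) = shockSq γ ε₁ ε₂ a ρ* = O(ε₂ (ρ*)^γ)`, while `A + B = u₋ - u₊ > 0`; hence `ρ* → ∞`.
Then `A² / B² → ρ₊ / ρ₋`, which together with `A + B = u₋ - u₊` gives
`A → (u₋ - u₊) √ρ₊ / (√ρ₋ + √ρ₊)` and `B → (u₋ - u₊) √ρ₋ / (√ρ₋ + √ρ₊)`. Finally
`ρ* (σ₂ - σ₁) = (ρ₋ - 2ε₁) A ρ* / (ρ* - ρ₋) + (ρ₊ - 2ε₁) B ρ* / (ρ* - ρ₊) → ρ₋ lim A + ρ₊ lim B`,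
and both this limit and `σ (ρ₊ - ρ₋) - (ρ₊ u₊ - ρ₋ u₋)` equal `(u₋ - u₊) √(ρ₋ ρ₊)`.
-/

open Filter Topology

section Asymptotics

variable {ι : Type*} {l : Filter ι}

theorem tendsto_mul_add_div_mul_add {x p q r s : ι → ℝ} {p₀ q₀ r₀ s₀ : ℝ}
    (hx : Tendsto x l atTop) (hp : Tendsto p l (𝓝 p₀)) (hq : Tendsto q l (𝓝 q₀))
    (hr : Tendsto r l (𝓝 r₀)) (hs : Tendsto s l (𝓝 s₀)) (hq₀ : q₀ ≠ 0) :
    Tendsto (fun n => (p n * x n + r n) / (q n * x n + s n)) l (𝓝 (p₀ / q₀)) := by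
  have hlim : Tendsto (fun n => (p n + r n / x n) / (q n + s n / x n)) l
      (𝓝 ((p₀ + 0) / (q₀ + 0))) :=
    (hp.add (hr.div_atTop hx)).div (hq.add (hs.div_atTop hx)) (by simpa using hq₀)
  rw [add_zero, add_zero] at hlim
  refine hlim.congr' ?_
  filter_upwards [hx.eventually_gt_atTop 0] with n hxn
  rw [← mul_div_mul_right _ _ hxn.ne']
  congr 1 <;> field_simp

theorem tendsto_sub_div_sub_of_tendsto_atTop {x : ι → ℝ} (hx : Tendsto x l atTop) (a b : ℝ) :
    Tendsto (fun n => (x n - a) / (x n - b)) l (𝓝 1) := by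
  have h := tendsto_mul_add_div_mul_add hx (p := fun _ => 1) (q := fun _ => 1)
    (r := fun _ => -a) (s := fun _ => -b) tendsto_const_nhds tendsto_const_nhds
    tendsto_const_nhds tendsto_const_nhds one_ne_zero
  rw [div_one] at h
  exact h.congr fun n => by ring

theorem tendsto_atTop_of_le_mul {ε y : ι → ℝ} {c : ℝ} (hc : 0 < c)
    (hε : Tendsto ε l (𝓝[>] 0)) (h : ∀ᶠ n in l, c ≤ ε n * y n) : Tendsto y l atTop := by
  refine tendsto_atTop_mono' l ?_ ((tendsto_inv_nhdsGT_zero.comp hε).const_mul_atTop hc)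
  filter_upwards [h, (tendsto_nhdsWithin_iff.1 hε).2] with n hn hεn
  rw [Function.comp_apply, ← div_eq_mul_inv, div_le_iff₀' hεn]
  exact hn

theorem tendsto_of_add_eq_of_tendsto_div {A B : ι → ℝ} {c p q : ℝ} (hAB : ∀ n, A n + B n = c)
    (hB : ∀ n, B n ≠ 0) (hpq : Tendsto (fun n => A n / B n) l (𝓝 (p / q))) (hq : q ≠ 0)
    (hp : p + q ≠ 0) :
    Tendsto A l (𝓝 (c * p / (p + q))) ∧ Tendsto B l (𝓝 (c * q / (p + q))) := by
  have ht : p / q + 1 ≠ 0 := by rwa [div_add_one hq, div_ne_zero_iff, and_iff_left hq]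
  have hB_lim : Tendsto B l (𝓝 (c / (p / q + 1))) := by
    refine ((tendsto_const_nhds (x := c)).div (hpq.add_const 1) ht).congr' ?_
    filter_upwards [(hpq.add_const 1).eventually_ne ht] with n hn
    show c / (A n / B n + 1) = B n
    rw [div_eq_iff hn, mul_add, mul_div_cancel₀ _ (hB n), mul_one, hAB n]
  have hA_lim := (tendsto_const_nhds (x := c)).sub hB_lim
  rw [div_add_one hq, div_div_eq_mul_div] at hA_lim hB_lim
  refine ⟨?_, hB_lim⟩
  convert hA_lim.congr fun n => (eq_sub_of_add_eq (hAB n)).symm using 2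
  field_simp
  ring

end Asymptotics

/-- The squared velocity jump across a shock from density `a` to density `x`: the shock relations
read `u* - u₋ = -√(shockSq γ ε₁ ε₂ ρ₋ ρ*)` and `u₊ - u* = -√(shockSq γ ε₁ ε₂ ρ₊ ρ*)`. -/
noncomputable def shockSq (γ ε₁ ε₂ a x : ℝ) : ℝ :=
  ε₂ * (x - a) * (x ^ γ - a ^ γ) / (γ * (a * x - ε₁ * (a + x)))

theorem shockSq_pos {γ ε₁ ε₂ a x : ℝ} (hγ : 0 < γ) (hε₂ : 0 < ε₂) (ha : 0 ≤ a) (hx : a < x)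
    (hD : 0 < a * x - ε₁ * (a + x)) : 0 < shockSq γ ε₁ ε₂ a x := by
  have hpow : a ^ γ < x ^ γ := Real.rpow_lt_rpow ha hx hγ
  unfold shockSq
  have := sub_pos.2 hx
  have := sub_pos.2 hpow
  positivity

theorem shockSq_le {γ ε₁ ε₂ a x : ℝ} (hγ : 0 < γ) (hε₂ : 0 ≤ ε₂) (ha : 0 < a)
    (h4ε₁ : 4 * ε₁ ≤ a) (hx : a < x) : shockSq γ ε₁ ε₂ a x ≤ ε₂ * (2 / (γ * a)) * x ^ γ := by
  have hx₀ : 0 < x := ha.trans hx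
  have hpow : a ^ γ ≤ x ^ γ := Real.rpow_le_rpow ha.le hx.le hγ.le
  have hD : x * a / 2 ≤ a * x - ε₁ * (a + x) := by nlinarith
  have hN : ε₂ * (x - a) * (x ^ γ - a ^ γ) ≤ ε₂ * x * x ^ γ := by
    have := Real.rpow_nonneg ha.le γ
    gcongr <;> linarith
  calc shockSq γ ε₁ ε₂ a x ≤ ε₂ * x * x ^ γ / (γ * (x * a / 2)) := by
        unfold shockSq
        gcongr
    _ = ε₂ * (2 / (γ * a)) * x ^ γ := by field_simp

theorem shockSq_div_shockSq {γ ε₁ ε₂ a b x : ℝ} (hγ : γ ≠ 0) (hε₂ : ε₂ ≠ 0) :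
    shockSq γ ε₁ ε₂ a x / shockSq γ ε₁ ε₂ b x =
      (x - a) / (x - b) * ((x ^ γ - a ^ γ) / (x ^ γ - b ^ γ)) *
        ((b * x - ε₁ * (b + x)) / (a * x - ε₁ * (a + x))) := by
  have h : shockSq γ ε₁ ε₂ a x / shockSq γ ε₁ ε₂ b x = ε₂ / ε₂ * (γ / γ) *
      ((x - a) / (x - b) * ((x ^ γ - a ^ γ) / (x ^ γ - b ^ γ)) *
        ((b * x - ε₁ * (b + x)) / (a * x - ε₁ * (a + x)))) := by
    simp only [shockSq, div_eq_mul_inv, mul_inv, inv_inv]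
    ring
  rw [h, div_self hε₂, div_self hγ, one_mul, one_mul]

theorem mul_sub_shock_speeds {ρ ρm ρp e u um up : ℝ} (hm : ρ ≠ ρm) (hp : ρ ≠ ρp) :
    ρ * ((u + (ρp - 2 * e) * (up - u) / (ρp - ρ)) - (u + (ρm - 2 * e) * (u - um) / (ρ - ρm))) =
      (ρm - 2 * e) * (um - u) * (ρ / (ρ - ρm)) + (ρp - 2 * e) * (u - up) * (ρ / (ρ - ρp)) := by
  have := sub_ne_zero.2 hm
  have := sub_ne_zero.2 hp
  have := sub_ne_zero.2 hp.symm
  field_simp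
  ring

theorem sqrt_mean_mul_sub_eq {ρm ρp : ℝ} (hρm : 0 < ρm) (hρp : 0 < ρp) (um up : ℝ) :
    (√ρm * um + √ρp * up) / (√ρm + √ρp) * (ρp - ρm) - (ρp * up - ρm * um) =
      ρm * ((um - up) * √ρp / (√ρp + √ρm)) + ρp * ((um - up) * √ρm / (√ρp + √ρm)) := by
  have := Real.sqrt_pos.2 hρm
  have := Real.sqrt_pos.2 hρp
  rw [← Real.sq_sqrt hρm.le, ← Real.sq_sqrt hρp.le]
  field_simp
  ring

section ShockSequences

variable {ι : Type*} {l : Filter ι} {γ : ℝ} {ε₁ ε₂ x : ι → ℝ}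

theorem tendsto_shockSq_div_shockSq (hγ : 0 < γ) {a : ℝ} (ha : a ≠ 0) (b : ℝ)
    (hε₂ : ∀ n, ε₂ n ≠ 0) (hε₁ : Tendsto ε₁ l (𝓝 0)) (hx : Tendsto x l atTop) :
    Tendsto (fun n => shockSq γ (ε₁ n) (ε₂ n) a (x n) / shockSq γ (ε₁ n) (ε₂ n) b (x n)) l
      (𝓝 (b / a)) := by
  have hdens : Tendsto (fun n => (b * x n - ε₁ n * (b + x n)) / (a * x n - ε₁ n * (a + x n)))
      l (𝓝 (b / a)) := by
    have h := tendsto_mul_add_div_mul_add hx ((tendsto_const_nhds (x := b)).sub hε₁)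
      ((tendsto_const_nhds (x := a)).sub hε₁) (hε₁.mul_const b).neg (hε₁.mul_const a).neg
      (by simpa using ha)
    simp only [sub_zero] at h
    exact h.congr fun n => by congr 1 <;> ring
  have hlim := ((tendsto_sub_div_sub_of_tendsto_atTop hx a b).mul
    (tendsto_sub_div_sub_of_tendsto_atTop ((tendsto_rpow_atTop hγ).comp hx) (a ^ γ) (b ^ γ))).mul
    hdens
  rw [one_mul, one_mul] at hlim
  exact hlim.congr fun n => (shockSq_div_shockSq hγ.ne' (hε₂ n)).symm

theorem tendsto_atTop_of_sqrt_shockSq_add_sqrt_shockSq {a b c : ℝ} (hγ : 0 < γ) (ha : 0 < a)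
    (hb : 0 < b) (hc : 0 < c) (hε₂pos : ∀ n, 0 < ε₂ n)
    (hε₁ : Tendsto ε₁ l (𝓝 0)) (hε₂ : Tendsto ε₂ l (𝓝 0)) (hxa : ∀ n, a < x n)
    (hxb : ∀ n, b < x n)
    (hsum : ∀ n, √(shockSq γ (ε₁ n) (ε₂ n) a (x n)) + √(shockSq γ (ε₁ n) (ε₂ n) b (x n)) = c) :
    Tendsto x l atTop := by
  set K := 2 / (γ * a) + 2 / (γ * b)
  have hK : 0 < K := by positivity
  have hε : Tendsto (fun n => ε₂ n * K) l (𝓝[>] 0) :=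
    tendsto_nhdsWithin_iff.2 ⟨by simpa using hε₂.mul_const K,
      Eventually.of_forall fun n => mul_pos (hε₂pos n) hK⟩
  have hpow : Tendsto (fun n => x n ^ γ) l atTop := by
    refine tendsto_atTop_of_le_mul (c := c ^ 2 / 2) (by positivity) hε ?_
    filter_upwards [hε₁.eventually (eventually_le_nhds (by positivity : 0 < a / 4)),
      hε₁.eventually (eventually_le_nhds (by positivity : 0 < b / 4))] with n hna hnb
    set Ua := ε₂ n * (2 / (γ * a)) * x n ^ γ
    set Ub := ε₂ n * (2 / (γ * b)) * x n ^ γ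
    have hx₀ : 0 ≤ x n ^ γ := Real.rpow_nonneg (ha.trans (hxa n)).le γ
    have hUa : 0 ≤ Ua := by have := hε₂pos n; positivity
    have hUb : 0 ≤ Ub := by have := hε₂pos n; positivity
    have hle : c ≤ √Ua + √Ub := by
      rw [← hsum n]
      gcongr
      · exact shockSq_le hγ (hε₂pos n).le ha (by linarith) (hxa n)
      · exact shockSq_le hγ (hε₂pos n).le hb (by linarith) (hxb n)
    have hsq : c ^ 2 ≤ 2 * (Ua + Ub) := by
      nlinarith [Real.sq_sqrt hUa, Real.sq_sqrt hUb, sq_nonneg (√Ua - √Ub)]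
    calc c ^ 2 / 2 ≤ Ua + Ub := by linarith
      _ = ε₂ n * K * x n ^ γ := by ring
  refine ((tendsto_rpow_atTop (inv_pos.2 hγ)).comp hpow).congr fun n => ?_
  exact Real.rpow_rpow_inv (ha.trans (hxa n)).le hγ.ne'

end ShockSequences

theorem intermediate_mass_limit_general
    (γ ρm ρp um up σ : ℝ) (hγ : 1 < γ) (hρm : 0 < ρm) (hρp : 0 < ρp)
    (hu : up < um)
    (hσ : σ = (Real.sqrt ρm * um + Real.sqrt ρp * up) /
      (Real.sqrt ρm + Real.sqrt ρp))
    (ε₁ ε₂ ρs us σ₁ σ₂ : ℕ → ℝ)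
    (hε₂pos : ∀ n, 0 < ε₂ n)
    (hε₁ : Filter.Tendsto ε₁ Filter.atTop (nhds 0))
    (hε₂ : Filter.Tendsto ε₂ Filter.atTop (nhds 0))
    (hρs : ∀ n, max ρm ρp < ρs n)
    (hd1 : ∀ n, 0 < ρm * ρs n - ε₁ n * (ρm + ρs n))
    (hd2 : ∀ n, 0 < ρp * ρs n - ε₁ n * (ρp + ρs n))
    (hback : ∀ n, us n - um =
      -Real.sqrt (ε₂ n * (ρs n - ρm) * ((ρs n) ^ γ - ρm ^ γ) /
        (γ * (ρm * ρs n - ε₁ n * (ρm + ρs n)))))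
    (hforw : ∀ n, up - us n =
      -Real.sqrt (ε₂ n * (ρs n - ρp) * ((ρs n) ^ γ - ρp ^ γ) /
        (γ * (ρp * ρs n - ε₁ n * (ρp + ρs n)))))
    (hσ₁ : ∀ n, σ₁ n = us n + (ρm - 2 * ε₁ n) * (us n - um) / (ρs n - ρm))
    (hσ₂ : ∀ n, σ₂ n = us n + (ρp - 2 * ε₁ n) * (up - us n) / (ρp - ρs n)) :
    Filter.Tendsto (fun n => ρs n * (σ₂ n - σ₁ n)) Filter.atTop
      (nhds (σ * (ρp - ρm) - (ρp * up - ρm * um))) := by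
  have hγ₀ : 0 < γ := zero_lt_one.trans hγ
  have hρm_lt n : ρm < ρs n := (le_max_left _ _).trans_lt (hρs n)
  have hρp_lt n : ρp < ρs n := (le_max_right _ _).trans_lt (hρs n)
  set F := fun n => shockSq γ (ε₁ n) (ε₂ n) ρm (ρs n)
  set G := fun n => shockSq γ (ε₁ n) (ε₂ n) ρp (ρs n)
  have hA n : um - us n = √(F n) := by rw [← neg_sub, hback n, neg_neg]; rfl
  have hB n : us n - up = √(G n) := by rw [← neg_sub, hforw n, neg_neg]; rfl
  have hρs_top : Tendsto ρs atTop atTop :=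
    tendsto_atTop_of_sqrt_shockSq_add_sqrt_shockSq hγ₀ hρm hρp (sub_pos.2 hu) hε₂pos hε₁ hε₂
      hρm_lt hρp_lt fun n => by rw [← hA n, ← hB n]; ring
  have hratio : Tendsto (fun n => (um - us n) / (us n - up)) atTop (𝓝 (√ρp / √ρm)) := by
    rw [← Real.sqrt_div hρp.le]
    refine ((tendsto_shockSq_div_shockSq hγ₀ hρm.ne' ρp (fun n => (hε₂pos n).ne') hε₁
      hρs_top).sqrt).congr fun n => ?_
    rw [hA n, hB n, Real.sqrt_div (shockSq_pos hγ₀ (hε₂pos n) hρm.le (hρm_lt n) (hd1 n)).le]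
  obtain ⟨hA_lim, hB_lim⟩ := tendsto_of_add_eq_of_tendsto_div (c := um - up) (fun n => by ring)
    (fun n => (hB n).trans_ne (Real.sqrt_pos.2
      (shockSq_pos hγ₀ (hε₂pos n) hρp.le (hρp_lt n) (hd2 n))).ne') hratio
    (Real.sqrt_pos.2 hρm).ne' (by positivity)
  have hlim := ((((tendsto_const_nhds (x := ρm)).sub (hε₁.const_mul 2)).mul hA_lim).mul
    (tendsto_sub_div_sub_of_tendsto_atTop hρs_top 0 ρm)).add
    ((((tendsto_const_nhds (x := ρp)).sub (hε₁.const_mul 2)).mul hB_lim).mul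
      (tendsto_sub_div_sub_of_tendsto_atTop hρs_top 0 ρp))
  simp only [mul_zero, sub_zero, mul_one] at hlim
  rw [hσ, sqrt_mean_mul_sub_eq hρm hρp]
  refine hlim.congr fun n => ?_
  rw [hσ₁ n, hσ₂ n, mul_sub_shock_speeds (hρm_lt n).ne' (hρp_lt n).ne']

/-- Lemma 5.4: the product of the intermediate density with
the gap of the shock speeds converges to the weight derivative
σ[ρ] − [ρu] of the limiting delta shock. -/
theorem intermediate_mass_limit
    (γ ρm ρp um up σ : ℝ) (hγ : 1 < γ) (hρm : 0 < ρm) (hρp : 0 < ρp)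
    (hu : up < um)
    (hσ : σ = (Real.sqrt ρm * um + Real.sqrt ρp * up) /
      (Real.sqrt ρm + Real.sqrt ρp))
    (ε₁ ε₂ ρs us σ₁ σ₂ : ℕ → ℝ)
    (hε₁pos : ∀ n, 0 < ε₁ n) (hε₂pos : ∀ n, 0 < ε₂ n)
    (hε₁ : Filter.Tendsto ε₁ Filter.atTop (nhds 0))
    (hε₂ : Filter.Tendsto ε₂ Filter.atTop (nhds 0))
    (hρs : ∀ n, max ρm ρp < ρs n)
    (hd1 : ∀ n, 0 < ρm * ρs n - ε₁ n * (ρm + ρs n))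
    (hd2 : ∀ n, 0 < ρp * ρs n - ε₁ n * (ρp + ρs n))
    (hback : ∀ n, us n - um =
      -Real.sqrt (ε₂ n * (ρs n - ρm) * ((ρs n) ^ γ - ρm ^ γ) /
        (γ * (ρm * ρs n - ε₁ n * (ρm + ρs n)))))
    (hforw : ∀ n, up - us n =
      -Real.sqrt (ε₂ n * (ρs n - ρp) * ((ρs n) ^ γ - ρp ^ γ) /
        (γ * (ρp * ρs n - ε₁ n * (ρp + ρs n)))))
    (hσ₁ : ∀ n, σ₁ n = us n + (ρm - 2 * ε₁ n) * (us n - um) / (ρs n - ρm))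
    (hσ₂ : ∀ n, σ₂ n = us n + (ρp - 2 * ε₁ n) * (up - us n) / (ρp - ρs n)) :
    Filter.Tendsto (fun n => ρs n * (σ₂ n - σ₁ n)) Filter.atTop
      (nhds (σ * (ρp - ρm) - (ρp * up - ρm * um))) :=
  intermediate_mass_limit_general γ ρm ρp um up σ hγ hρm hρp hu hσ ε₁ ε₂ ρs us σ₁ σ₂ hε₂pos hε₁ hε₂
    hρs hd1 hd2 hback hforw hσ₁ hσ₂
end

section
/- (Theorem 5.5, density part) Let γ > 1, ρ₋, ρ₊ > 0, u₋ > u₊, σ = (√ρ₋ u₋ + √ρ₊ u₊)/(√ρ₋ + √ρ₊). Let (ε₁ⁿ), (ε₂ⁿ) be positive sequences tending to 0 with intermediate states ρ*ⁿ > max(ρ₋,ρ₊), u*ⁿ satisfying the two shock-curve relations of Lemma 5.1, and with shock speeds σ₁ⁿ = u*ⁿ + (ρ₋ − 2ε₁ⁿ)(u*ⁿ − u₋)/(ρ*ⁿ − ρ₋) < σ₂ⁿ = u*ⁿ + (ρ₊ − 2ε₁ⁿ)(u₊ − u*ⁿ)/(ρ₊ − ρ*ⁿ). Define ρⁿ(ξ)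 = ρ₋ for ξ < σ₁ⁿ, ρⁿ(ξ) = ρ*ⁿ for σ₁ⁿ < ξ < σ₂ⁿ, ρⁿ(ξ) = ρ₊ for ξ > σ₂ⁿ. Then for every smooth compactly supported φ : ℝ → ℝ, ∫_ℝ ρⁿ(ξ)φ(ξ)dξ → (σ(ρ₊ − ρ₋) − (ρ₊u₊ − ρ₋u₋))·φ(σ) + ∫_ℝ H(ξ − σ)φ(ξ)dξ as n → ∞, where H(y) = ρ₋ for y < 0 and H(y) = ρ₊ for y > 0. -/
open MeasureTheory Filter Set

/-- Theorem 5.5, density part: the density of the two-shock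
Riemann solution converges in the sense of distributions to a step function
plus a Dirac mass at σ with weight σ[ρ] − [ρu]. -/
theorem two_shock_density_delta_limit
    (γ ρm ρp um up σ : ℝ) (hγ : 1 < γ) (hρm : 0 < ρm) (hρp : 0 < ρp)
    (hu : up < um)
    (hσ : σ = (Real.sqrt ρm * um + Real.sqrt ρp * up) /
      (Real.sqrt ρm + Real.sqrt ρp))
    (ε₁ ε₂ ρs us σ₁ σ₂ : ℕ → ℝ)
    (hε₁pos : ∀ n, 0 < ε₁ n) (hε₂pos : ∀ n, 0 < ε₂ n)
    (hε₁ : Filter.Tendsto ε₁ Filter.atTop (nhds 0))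
    (hε₂ : Filter.Tendsto ε₂ Filter.atTop (nhds 0))
    (hρs : ∀ n, max ρm ρp < ρs n)
    (hd1 : ∀ n, 0 < ρm * ρs n - ε₁ n * (ρm + ρs n))
    (hd2 : ∀ n, 0 < ρp * ρs n - ε₁ n * (ρp + ρs n))
    (hback : ∀ n, us n - um =
      -Real.sqrt (ε₂ n * (ρs n - ρm) * ((ρs n) ^ γ - ρm ^ γ) /
        (γ * (ρm * ρs n - ε₁ n * (ρm + ρs n)))))
    (hforw : ∀ n, up - us n =
      -Real.sqrt (ε₂ n * (ρs n - ρp) * ((ρs n) ^ γ - ρp ^ γ) /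
        (γ * (ρp * ρs n - ε₁ n * (ρp + ρs n)))))
    (hσ₁ : ∀ n, σ₁ n = us n + (ρm - 2 * ε₁ n) * (us n - um) / (ρs n - ρm))
    (hσ₂ : ∀ n, σ₂ n = us n + (ρp - 2 * ε₁ n) * (up - us n) / (ρp - ρs n))
    (hlt : ∀ n, σ₁ n < σ₂ n)
    (ρn : ℕ → ℝ → ℝ)
    (hρn : ∀ n ξ, ρn n ξ =
      if ξ < σ₁ n then ρm else if ξ < σ₂ n then ρs n else ρp)
    (H : ℝ → ℝ) (hH : ∀ y, H y = if y < 0 then ρm else ρp) :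
    ∀ φ : ℝ → ℝ, ContDiff ℝ (⊤ : ℕ∞) φ → HasCompactSupport φ →
      Filter.Tendsto (fun n => ∫ ξ, ρn n ξ * φ ξ) Filter.atTop
        (nhds ((σ * (ρp - ρm) - (ρp * up - ρm * um)) * φ σ +
          ∫ ξ, H (ξ - σ) * φ ξ)) := by
  intro φ hφ hφc
  have hγ0 : (0:ℝ) < γ := lt_trans one_pos hγ
  have hρmρs : ∀ n, ρm < ρs n := fun n => lt_of_le_of_lt (le_max_left _ _) (hρs n)
  have hρpρs : ∀ n, ρp < ρs n := fun n => lt_of_le_of_lt (le_max_right _ _) (hρs n)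
  have hρspos : ∀ n, 0 < ρs n := fun n => hρm.trans (hρmρs n)
  set Δ : ℝ := um - up with hΔdef
  clear_value Δ
  have hΔ : 0 < Δ := by rw [hΔdef]; linarith
  set X : ℕ → ℝ := fun n => ε₂ n * (ρs n - ρm) * ((ρs n) ^ γ - ρm ^ γ) /
      (γ * (ρm * ρs n - ε₁ n * (ρm + ρs n))) with hXdef
  set Y : ℕ → ℝ := fun n => ε₂ n * (ρs n - ρp) * ((ρs n) ^ γ - ρp ^ γ) /
      (γ * (ρp * ρs n - ε₁ n * (ρp + ρs n))) with hYdef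
  clear_value X Y
  have hrpowm : ∀ n, ρm ^ γ < (ρs n) ^ γ := fun n => Real.rpow_lt_rpow hρm.le (hρmρs n) hγ0
  have hrpowp : ∀ n, ρp ^ γ < (ρs n) ^ γ := fun n => Real.rpow_lt_rpow hρp.le (hρpρs n) hγ0
  have hXpos : ∀ n, 0 < X n := fun n => hXdef ▸ div_pos
    (mul_pos (mul_pos (hε₂pos n) (sub_pos.2 (hρmρs n))) (sub_pos.2 (hrpowm n)))
    (mul_pos hγ0 (hd1 n))
  have hYpos : ∀ n, 0 < Y n := fun n => hYdef ▸ div_pos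
    (mul_pos (mul_pos (hε₂pos n) (sub_pos.2 (hρpρs n))) (sub_pos.2 (hrpowp n)))
    (mul_pos hγ0 (hd2 n))
  have haX : ∀ n, um - us n = Real.sqrt (X n) := fun n => by
    have h := hback n; rw [hXdef]; linarith
  have hbY : ∀ n, us n - up = Real.sqrt (Y n) := fun n => by
    have h := hforw n; rw [hYdef]; linarith
  have hapos : ∀ n, 0 < um - us n := fun n => (haX n) ▸ Real.sqrt_pos.2 (hXpos n)
  have hbpos : ∀ n, 0 < us n - up := fun n => (hbY n) ▸ Real.sqrt_pos.2 (hYpos n)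
  have ha2 : ∀ n, (um - us n) ^ 2 = X n := fun n => by
    rw [haX n]; exact Real.sq_sqrt (hXpos n).le
  have hb2 : ∀ n, (us n - up) ^ 2 = Y n := fun n => by
    rw [hbY n]; exact Real.sq_sqrt (hYpos n).le
  have hρsTop : Filter.Tendsto ρs Filter.atTop Filter.atTop := by
    rw [Filter.tendsto_atTop]
    intro M
    set M' : ℝ := max M (max ρm ρp) + 1 with hM'
    clear_value M'
    have hM'M : M ≤ M' := by
      have := le_max_left M (max ρm ρp); linarith
    have hρmM' : ρm ≤ M' := by
      have h1 := le_max_right M (max ρm ρp); have h2 := le_max_left ρm ρp; linarith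
    have hρpM' : ρp ≤ M' := by
      have h1 := le_max_right M (max ρm ρp); have h2 := le_max_right ρm ρp; linarith
    have hM'pos : 0 < M' := lt_of_lt_of_le hρm hρmM'
    have hM'γpos : 0 < M' ^ γ := Real.rpow_pos_of_pos hM'pos γ
    have e1 : ∀ᶠ n in atTop, ε₁ n < ρm ^ 2 / (2 * (ρm + M')) :=
      hε₁.eventually_lt_const (by positivity)
    have e2 : ∀ᶠ n in atTop, ε₁ n < ρp ^ 2 / (2 * (ρp + M')) :=
      hε₁.eventually_lt_const (by positivity)
    have e3 : ∀ᶠ n in atTop, ε₂ n < γ * (ρm ^ 2 / 2) * (Δ / 2) ^ 2 / (M' * M' ^ γ) :=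
      hε₂.eventually_lt_const (by positivity)
    have e4 : ∀ᶠ n in atTop, ε₂ n < γ * (ρp ^ 2 / 2) * (Δ / 2) ^ 2 / (M' * M' ^ γ) :=
      hε₂.eventually_lt_const (by positivity)
    filter_upwards [e1, e2, e3, e4] with n h1 h2 h3 h4
    by_contra hcon
    push_neg at hcon
    have hρsM : ρs n ≤ M' := le_trans hcon.le hM'M
    have hrp : ρs n ^ γ ≤ M' ^ γ := Real.rpow_le_rpow (hρspos n).le hρsM hγ0.le
    have hrm0 : (0:ℝ) < ρm ^ γ := Real.rpow_pos_of_pos hρm γ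
    have hrp0 : (0:ℝ) < ρp ^ γ := Real.rpow_pos_of_pos hρp γ
    -- bound X n
    have key : ∀ (ρ : ℝ), 0 < ρ → ρ < ρs n → ρ ≤ M' →
        ε₁ n < ρ ^ 2 / (2 * (ρ + M')) →
        ε₂ n < γ * (ρ ^ 2 / 2) * (Δ / 2) ^ 2 / (M' * M' ^ γ) →
        ε₂ n * (ρs n - ρ) * ((ρs n) ^ γ - ρ ^ γ) /
          (γ * (ρ * ρs n - ε₁ n * (ρ + ρs n))) < (Δ / 2) ^ 2 := by
      intro ρ hρ hρρs hρM' hh1 hh3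
      have hρ0 : (0:ℝ) < ρ ^ γ := Real.rpow_pos_of_pos hρ γ
      have hnum : ε₂ n * (ρs n - ρ) * ((ρs n) ^ γ - ρ ^ γ) ≤ ε₂ n * (M' * M' ^ γ) := by
        have f1 : ρs n - ρ ≤ M' := by linarith
        have f2 : (ρs n) ^ γ - ρ ^ γ ≤ M' ^ γ := by linarith
        have f3 : (0:ℝ) ≤ ρs n - ρ := by linarith
        have f4 : (0:ℝ) ≤ (ρs n) ^ γ - ρ ^ γ :=
          sub_nonneg.2 (Real.rpow_le_rpow hρ.le hρρs.le hγ0.le)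
        have m1 : (ρs n - ρ) * ((ρs n) ^ γ - ρ ^ γ) ≤ M' * M' ^ γ :=
          mul_le_mul f1 f2 f4 (by linarith : (0:ℝ) ≤ M')
        rw [mul_assoc]
        exact mul_le_mul_of_nonneg_left m1 (hε₂pos n).le
      have hden : γ * (ρ ^ 2 / 2) ≤ γ * (ρ * ρs n - ε₁ n * (ρ + ρs n)) := by
        have g1 : ε₁ n * (ρ + ρs n) ≤ ε₁ n * (ρ + M') :=
          mul_le_mul_of_nonneg_left (by linarith) (hε₁pos n).le
        have g2 : ε₁ n * (ρ + M') ≤ ρ ^ 2 / 2 := by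
          have hpos : (0:ℝ) < 2 * (ρ + M') := by positivity
          have h5 := (lt_div_iff₀ hpos).1 hh1
          have h6 : ε₁ n * (2 * (ρ + M')) = 2 * (ε₁ n * (ρ + M')) := by ring
          linarith
        have g3 : ρ * ρ ≤ ρ * ρs n := mul_le_mul_of_nonneg_left hρρs.le hρ.le
        have g4 : ρ ^ 2 = ρ * ρ := sq ρ
        have : ρ ^ 2 / 2 ≤ ρ * ρs n - ε₁ n * (ρ + ρs n) := by linarith
        exact mul_le_mul_of_nonneg_left this hγ0.le
      have hdenpos : 0 < γ * (ρ ^ 2 / 2) := by positivity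
      have hX : ε₂ n * (ρs n - ρ) * ((ρs n) ^ γ - ρ ^ γ) /
          (γ * (ρ * ρs n - ε₁ n * (ρ + ρs n))) ≤ ε₂ n * (M' * M' ^ γ) / (γ * (ρ ^ 2 / 2)) := by
        apply div_le_div₀ (mul_nonneg (hε₂pos n).le (by positivity)) hnum hdenpos hden
      have h3' : ε₂ n * (M' * M' ^ γ) < γ * (ρ ^ 2 / 2) * (Δ / 2) ^ 2 := by
        rw [lt_div_iff₀ (by positivity)] at hh3; linarith
      calc ε₂ n * (ρs n - ρ) * ((ρs n) ^ γ - ρ ^ γ) /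
          (γ * (ρ * ρs n - ε₁ n * (ρ + ρs n)))
          ≤ ε₂ n * (M' * M' ^ γ) / (γ * (ρ ^ 2 / 2)) := hX
        _ < (Δ / 2) ^ 2 := by rw [div_lt_iff₀ hdenpos]; linarith
    have hXlt := key ρm hρm (hρmρs n) hρmM' h1 h3
    have hYlt := key ρp hρp (hρpρs n) hρpM' h2 h4
    have hXn : X n < (Δ / 2) ^ 2 := by rw [hXdef]; exact hXlt
    have hYn : Y n < (Δ / 2) ^ 2 := by rw [hYdef]; exact hYlt
    have haΔ : um - us n < Δ / 2 := by
      by_contra hc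
      push_neg at hc
      have := pow_le_pow_left₀ (by linarith : (0:ℝ) ≤ Δ / 2) hc 2
      have h7 := ha2 n
      linarith
    have hbΔ : us n - up < Δ / 2 := by
      by_contra hc
      push_neg at hc
      have := pow_le_pow_left₀ (by linarith : (0:ℝ) ≤ Δ / 2) hc 2
      have h7 := hb2 n
      linarith
    rw [hΔdef] at haΔ hbΔ
    linarith
  have hus : Filter.Tendsto us Filter.atTop (nhds σ) := by
    have hρsγTop : Tendsto (fun n => (ρs n) ^ γ) atTop atTop :=
      (tendsto_rpow_atTop hγ0).comp hρsTop
    have h0m : Tendsto (fun n => ρm / ρs n) atTop (nhds 0) :=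
      tendsto_const_nhds.div_atTop hρsTop
    have h0p : Tendsto (fun n => ρp / ρs n) atTop (nhds 0) :=
      tendsto_const_nhds.div_atTop hρsTop
    have h0mγ : Tendsto (fun n => ρm ^ γ / (ρs n) ^ γ) atTop (nhds 0) :=
      tendsto_const_nhds.div_atTop hρsγTop
    have h0pγ : Tendsto (fun n => ρp ^ γ / (ρs n) ^ γ) atTop (nhds 0) :=
      tendsto_const_nhds.div_atTop hρsγTop
    have hR1 : Tendsto (fun n => (ρs n - ρm) / (ρs n - ρp)) atTop (nhds 1) := by
      have heq : ∀ n, (ρs n - ρm) / (ρs n - ρp) = (1 - ρm / ρs n) / (1 - ρp / ρs n) := by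
        intro n
        have h1 : ρs n ≠ 0 := (hρspos n).ne'
        have h2 : ρs n - ρp ≠ 0 := (sub_pos.2 (hρpρs n)).ne'
        rw [div_eq_div_iff h2 (by
          have : ρp / ρs n < 1 := (div_lt_one (hρspos n)).2 (hρpρs n)
          linarith)]
        field_simp
        all_goals ring
      have l1 : Tendsto (fun n => 1 - ρm / ρs n) atTop (nhds 1) := by
        simpa using tendsto_const_nhds.sub h0m
      have l2 : Tendsto (fun n => 1 - ρp / ρs n) atTop (nhds 1) := by
        simpa using tendsto_const_nhds.sub h0p
      have := l1.div l2 one_ne_zero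
      simpa using this.congr fun n => (heq n).symm
    have hR2 : Tendsto (fun n => ((ρs n) ^ γ - ρm ^ γ) / ((ρs n) ^ γ - ρp ^ γ)) atTop (nhds 1) := by
      have heq : ∀ n, ((ρs n) ^ γ - ρm ^ γ) / ((ρs n) ^ γ - ρp ^ γ)
          = (1 - ρm ^ γ / (ρs n) ^ γ) / (1 - ρp ^ γ / (ρs n) ^ γ) := by
        intro n
        have h0 : (0:ℝ) < (ρs n) ^ γ := Real.rpow_pos_of_pos (hρspos n) γ
        have h1 : (ρs n) ^ γ ≠ 0 := h0.ne'
        have h2 : (ρs n) ^ γ - ρp ^ γ ≠ 0 := (sub_pos.2 (hrpowp n)).ne'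
        rw [div_eq_div_iff h2 (by
          have : ρp ^ γ / (ρs n) ^ γ < 1 := (div_lt_one h0).2 (hrpowp n)
          linarith)]
        field_simp
        all_goals ring
      have l1 : Tendsto (fun n => 1 - ρm ^ γ / (ρs n) ^ γ) atTop (nhds 1) := by
        simpa using tendsto_const_nhds.sub h0mγ
      have l2 : Tendsto (fun n => 1 - ρp ^ γ / (ρs n) ^ γ) atTop (nhds 1) := by
        simpa using tendsto_const_nhds.sub h0pγ
      have := l1.div l2 one_ne_zero
      simpa using this.congr fun n => (heq n).symm
    have hR3 : Tendsto (fun n => (ρp * ρs n - ε₁ n * (ρp + ρs n)) /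
        (ρm * ρs n - ε₁ n * (ρm + ρs n))) atTop (nhds (ρp / ρm)) := by
      have heq : ∀ n, (ρp * ρs n - ε₁ n * (ρp + ρs n)) / (ρm * ρs n - ε₁ n * (ρm + ρs n))
          = (ρp - ε₁ n * (ρp / ρs n + 1)) / (ρm - ε₁ n * (ρm / ρs n + 1)) := by
        intro n
        have h1 : ρs n ≠ 0 := (hρspos n).ne'
        have h2 : ρm * ρs n - ε₁ n * (ρm + ρs n) ≠ 0 := (hd1 n).ne'
        have h3 : ρm - ε₁ n * (ρm / ρs n + 1) ≠ 0 := by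
          have he : ρm - ε₁ n * (ρm / ρs n + 1) = (ρm * ρs n - ε₁ n * (ρm + ρs n)) / ρs n := by
            field_simp; all_goals ring
          rw [he]
          exact div_ne_zero h2 h1
        rw [div_eq_div_iff h2 h3]
        field_simp
        all_goals ring
      have lp : Tendsto (fun n => ρp - ε₁ n * (ρp / ρs n + 1)) atTop (nhds ρp) := by
        have : Tendsto (fun n => ε₁ n * (ρp / ρs n + 1)) atTop (nhds 0) := by
          simpa using hε₁.mul (h0p.add (tendsto_const_nhds (x := (1:ℝ))))
        simpa using tendsto_const_nhds.sub this
      have lm : Tendsto (fun n => ρm - ε₁ n * (ρm / ρs n + 1)) atTop (nhds ρm) := by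
        have : Tendsto (fun n => ε₁ n * (ρm / ρs n + 1)) atTop (nhds 0) := by
          simpa using hε₁.mul (h0m.add (tendsto_const_nhds (x := (1:ℝ))))
        simpa using tendsto_const_nhds.sub this
      exact (lp.div lm hρm.ne').congr fun n => (heq n).symm
    have hXY : Tendsto (fun n => X n / Y n) atTop (nhds (ρp / ρm)) := by
      have heq : ∀ n, X n / Y n = ((ρs n - ρm) / (ρs n - ρp)) *
          (((ρs n) ^ γ - ρm ^ γ) / ((ρs n) ^ γ - ρp ^ γ)) *
          ((ρp * ρs n - ε₁ n * (ρp + ρs n)) / (ρm * ρs n - ε₁ n * (ρm + ρs n))) := by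
        intro n
        rw [hXdef, hYdef]
        have h1 : ε₂ n ≠ 0 := (hε₂pos n).ne'
        have h2 : γ ≠ 0 := hγ0.ne'
        have h3 : ρm * ρs n - ε₁ n * (ρm + ρs n) ≠ 0 := (hd1 n).ne'
        have h4 : ρp * ρs n - ε₁ n * (ρp + ρs n) ≠ 0 := (hd2 n).ne'
        have h5 : ρs n - ρp ≠ 0 := (sub_pos.2 (hρpρs n)).ne'
        have h6 : (ρs n) ^ γ - ρp ^ γ ≠ 0 := (sub_pos.2 (hrpowp n)).ne'
        field_simp
        all_goals ring
      have := (hR1.mul hR2).mul hR3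
      simpa using this.congr fun n => (heq n).symm
    have hq : Tendsto (fun n => (um - us n) / (us n - up)) atTop (nhds (Real.sqrt (ρp / ρm))) := by
      have heq : ∀ n, (um - us n) / (us n - up) = Real.sqrt (X n / Y n) := fun n => by
        rw [haX n, hbY n, Real.sqrt_div (hXpos n).le]
      exact hXY.sqrt.congr fun n => (heq n).symm
    set k := Real.sqrt (ρp / ρm) with hk
    have hk0 : 0 ≤ k := Real.sqrt_nonneg _
    have hk1 : (0:ℝ) < 1 + k := by linarith
    have hb_lim : Tendsto (fun n => us n - up) atTop (nhds (Δ / (1 + k))) := by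
      have heq : ∀ n, us n - up = Δ / (1 + (um - us n) / (us n - up)) := by
        intro n
        have hb := hbpos n
        have hne : us n - up ≠ 0 := hb.ne'
        have hden : 1 + (um - us n) / (us n - up) ≠ 0 := by
          have h1 : 0 < (um - us n) / (us n - up) := div_pos (hapos n) hb
          positivity
        rw [eq_div_iff hden, hΔdef]
        field_simp
        all_goals ring
      have hden : Tendsto (fun n => 1 + (um - us n) / (us n - up)) atTop (nhds (1 + k)) :=
        tendsto_const_nhds.add hq
      exact (tendsto_const_nhds.div hden hk1.ne').congr fun n => (heq n).symm
    have hσval : up + Δ / (1 + k) = σ := by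
      rw [hσ, hk, hΔdef, Real.sqrt_div hρp.le]
      have hsm : 0 < Real.sqrt ρm := Real.sqrt_pos.2 hρm
      have hsp : 0 < Real.sqrt ρp := Real.sqrt_pos.2 hρp
      have h1 : Real.sqrt ρm + Real.sqrt ρp ≠ 0 := by positivity
      field_simp
      all_goals ring
    have hfin : Tendsto (fun n => up + (us n - up)) atTop (nhds (up + Δ / (1 + k))) :=
      tendsto_const_nhds.add hb_lim
    rw [hσval] at hfin
    exact hfin.congr fun n => by ring
  set w : ℝ := σ * (ρp - ρm) - (ρp * up - ρm * um) with hwdef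
  clear_value w
  obtain ⟨hσ₁lim, hσ₂lim, hKlim⟩ :
      Filter.Tendsto σ₁ Filter.atTop (nhds σ) ∧ Filter.Tendsto σ₂ Filter.atTop (nhds σ) ∧
      Filter.Tendsto (fun n => ρs n * (σ₂ n - σ₁ n)) Filter.atTop (nhds w) := by
    have hsubm : Tendsto (fun n => ρs n - ρm) atTop atTop := by
      have := tendsto_atTop_add_const_right atTop (-ρm) hρsTop
      exact this.congr fun n => by ring
    have hsubp : Tendsto (fun n => ρs n - ρp) atTop atTop := by
      have := tendsto_atTop_add_const_right atTop (-ρp) hρsTop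
      exact this.congr fun n => by ring
    have hnum1 : Tendsto (fun n => (ρm - 2 * ε₁ n) * (us n - um)) atTop
        (nhds (ρm * (σ - um))) := by
      have h1 : Tendsto (fun n => ρm - 2 * ε₁ n) atTop (nhds ρm) := by
        simpa using tendsto_const_nhds.sub (hε₁.const_mul 2)
      simpa using h1.mul (hus.sub tendsto_const_nhds)
    have hnum2 : Tendsto (fun n => (ρp - 2 * ε₁ n) * (up - us n)) atTop
        (nhds (ρp * (up - σ))) := by
      have h1 : Tendsto (fun n => ρp - 2 * ε₁ n) atTop (nhds ρp) := by
        simpa using tendsto_const_nhds.sub (hε₁.const_mul 2)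
      simpa using h1.mul (tendsto_const_nhds.sub hus)
    have hfrac1 : Tendsto (fun n => (ρm - 2 * ε₁ n) * (us n - um) / (ρs n - ρm)) atTop
        (nhds 0) := hnum1.div_atTop hsubm
    have hfrac2 : Tendsto (fun n => (ρp - 2 * ε₁ n) * (up - us n) / (ρp - ρs n)) atTop
        (nhds 0) := by
      have h1 : Tendsto (fun n => (ρp - 2 * ε₁ n) * (up - us n) / (ρs n - ρp)) atTop
          (nhds 0) := hnum2.div_atTop hsubp
      have h2 := h1.neg
      rw [neg_zero] at h2
      exact h2.congr fun n => by
        rw [show ρp - ρs n = -(ρs n - ρp) by ring, div_neg]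
    have hσ₁lim : Tendsto σ₁ atTop (nhds σ) := by
      have := hus.add hfrac1
      rw [add_zero] at this
      exact this.congr fun n => (hσ₁ n).symm
    have hσ₂lim : Tendsto σ₂ atTop (nhds σ) := by
      have := hus.add hfrac2
      rw [add_zero] at this
      exact this.congr fun n => (hσ₂ n).symm
    refine ⟨hσ₁lim, hσ₂lim, ?_⟩
    -- K limit
    have hA : Tendsto (fun n => ρs n / (ρs n - ρm)) atTop (nhds 1) := by
      have heq : ∀ n, ρs n / (ρs n - ρm) = 1 / (1 - ρm / ρs n) := by
        intro n
        have h1 : ρs n ≠ 0 := (hρspos n).ne'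
        have h2 : ρs n - ρm ≠ 0 := (sub_pos.2 (hρmρs n)).ne'
        rw [div_eq_div_iff h2 (by
          have : ρm / ρs n < 1 := (div_lt_one (hρspos n)).2 (hρmρs n)
          linarith)]
        field_simp
      have h0m : Tendsto (fun n => ρm / ρs n) atTop (nhds 0) :=
        tendsto_const_nhds.div_atTop hρsTop
      have l2 : Tendsto (fun n => 1 - ρm / ρs n) atTop (nhds 1) := by
        simpa using tendsto_const_nhds.sub h0m
      have := (tendsto_const_nhds (x := (1:ℝ))).div l2 one_ne_zero
      simpa using this.congr fun n => (heq n).symm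
    have hB : Tendsto (fun n => ρs n / (ρp - ρs n)) atTop (nhds (-1)) := by
      have heq : ∀ n, ρs n / (ρp - ρs n) = -(1 / (1 - ρp / ρs n)) := by
        intro n
        have h1 : ρs n ≠ 0 := (hρspos n).ne'
        have h2 : ρs n - ρp ≠ 0 := (sub_pos.2 (hρpρs n)).ne'
        rw [show ρp - ρs n = -(ρs n - ρp) by ring, div_neg, neg_inj]
        rw [div_eq_div_iff h2 (by
          have : ρp / ρs n < 1 := (div_lt_one (hρspos n)).2 (hρpρs n)
          linarith)]
        field_simp
      have h0p : Tendsto (fun n => ρp / ρs n) atTop (nhds 0) :=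
        tendsto_const_nhds.div_atTop hρsTop
      have l2 : Tendsto (fun n => 1 - ρp / ρs n) atTop (nhds 1) := by
        simpa using tendsto_const_nhds.sub h0p
      have := ((tendsto_const_nhds (x := (1:ℝ))).div l2 one_ne_zero).neg
      simpa using this.congr fun n => (heq n).symm
    have heqK : ∀ n, ρs n * (σ₂ n - σ₁ n) =
        (ρp - 2 * ε₁ n) * (up - us n) * (ρs n / (ρp - ρs n)) -
        (ρm - 2 * ε₁ n) * (us n - um) * (ρs n / (ρs n - ρm)) := by
      intro n
      rw [hσ₁ n, hσ₂ n]
      ring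
    have hlim := (hnum2.mul hB).sub (hnum1.mul hA)
    have hval : ρp * (up - σ) * (-1) - ρm * (σ - um) * 1 = w := by rw [hwdef]; ring
    rw [hval] at hlim
    exact hlim.congr fun n => (heqK n).symm
  have hφcont : Continuous φ := hφ.continuous
  have hint : Integrable φ := hφcont.integrable_of_hasCompactSupport hφc
  obtain ⟨Cb, hCb⟩ := hφc.exists_bound_of_continuous hφcont
  have hdiff : Differentiable ℝ φ := hφ.differentiable (by simp)
  obtain ⟨L, hL⟩ := (hφc.deriv).exists_bound_of_continuous (hφ.continuous_deriv (by simp))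
  have hL0 : (0:ℝ) ≤ L := le_trans (norm_nonneg _) (hL 0)
  have hlip : ∀ x y : ℝ, ‖φ x - φ y‖ ≤ L * ‖x - y‖ := fun x y =>
    Convex.norm_image_sub_le_of_norm_deriv_le (fun z _ => hdiff z)
      (fun z _ => hL z) convex_univ (Set.mem_univ y) (Set.mem_univ x)
  set T : ℝ := ∫ ξ, φ ξ with hT
  set F : ℝ → ℝ := fun s => ∫ ξ in Set.Iic s, φ ξ with hF
  -- continuity of F along sequences tending to σ
  have hFseq : ∀ g : ℕ → ℝ, Tendsto g atTop (nhds σ) →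
      Tendsto (fun n => F (g n)) atTop (nhds (F σ)) := by
    intro g hg
    rw [tendsto_iff_norm_sub_tendsto_zero]
    have hgz : Tendsto (fun n => ‖g n - σ‖) atTop (nhds 0) := by
      rw [← tendsto_iff_norm_sub_tendsto_zero]; exact hg
    apply squeeze_zero (fun n => norm_nonneg _) (g := fun n => Cb * ‖g n - σ‖)
    · intro n
      have he : F (g n) - F σ = ∫ x in σ..(g n), φ x :=
        intervalIntegral.integral_Iic_sub_Iic hint.integrableOn hint.integrableOn
      rw [he]
      have := intervalIntegral.norm_integral_le_of_norm_le_const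
        (C := Cb) (a := σ) (b := g n) (f := φ) (fun x _ => hCb x)
      calc ‖∫ x in σ..(g n), φ x‖ ≤ Cb * |g n - σ| := this
        _ = Cb * ‖g n - σ‖ := by rw [Real.norm_eq_abs]
    · simpa using hgz.const_mul Cb
  have hF1 := hFseq σ₁ hσ₁lim
  have hF2 := hFseq σ₂ hσ₂lim
  -- middle term
  have hmid : Tendsto (fun n => ρs n * (F (σ₂ n) - F (σ₁ n))) atTop (nhds (w * φ σ)) := by
    have heq : ∀ n, ρs n * (F (σ₂ n) - F (σ₁ n)) =
        ρs n * (∫ x in (σ₁ n)..(σ₂ n), (φ x - φ σ)) + (ρs n * (σ₂ n - σ₁ n)) * φ σ := by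
      intro n
      have h1 : F (σ₂ n) - F (σ₁ n) = ∫ x in (σ₁ n)..(σ₂ n), φ x :=
        intervalIntegral.integral_Iic_sub_Iic hint.integrableOn hint.integrableOn
      have h2 : (∫ x in (σ₁ n)..(σ₂ n), φ x) =
          (∫ x in (σ₁ n)..(σ₂ n), (φ x - φ σ)) + (σ₂ n - σ₁ n) * φ σ := by
        rw [intervalIntegral.integral_sub hint.intervalIntegrable
          intervalIntegrable_const, intervalIntegral.integral_const, smul_eq_mul]
        ring
      rw [h1, h2]
      ring
    have hz : Tendsto (fun n => ρs n * (∫ x in (σ₁ n)..(σ₂ n), (φ x - φ σ))) atTop (nhds 0) := by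
      rw [tendsto_zero_iff_norm_tendsto_zero]
      apply squeeze_zero (fun n => norm_nonneg _)
        (g := fun n => (L * (‖σ₁ n - σ‖ + ‖σ₂ n - σ‖)) * (ρs n * (σ₂ n - σ₁ n)))
      · intro n
        have hd0 : (0:ℝ) ≤ ‖σ₁ n - σ‖ + ‖σ₂ n - σ‖ := by positivity
        have hIb : ‖∫ x in (σ₁ n)..(σ₂ n), (φ x - φ σ)‖ ≤
            (L * (‖σ₁ n - σ‖ + ‖σ₂ n - σ‖)) * |σ₂ n - σ₁ n| := by
          apply intervalIntegral.norm_integral_le_of_norm_le_const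
          intro x hx
          rw [Set.uIoc_of_le (hlt n).le] at hx
          have hx1 : σ₁ n < x := hx.1
          have hx2 : x ≤ σ₂ n := hx.2
          have hxd : ‖x - σ‖ ≤ ‖σ₁ n - σ‖ + ‖σ₂ n - σ‖ := by
            rw [Real.norm_eq_abs]
            have a1 : σ₁ n - σ ≤ |σ₁ n - σ| := le_abs_self _
            have a2 : -|σ₁ n - σ| ≤ σ₁ n - σ := neg_abs_le _
            have a3 : σ₂ n - σ ≤ |σ₂ n - σ| := le_abs_self _
            have a4 : -|σ₂ n - σ| ≤ σ₂ n - σ := neg_abs_le _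
            have b1 : (0:ℝ) ≤ |σ₁ n - σ| := abs_nonneg _
            have b2 : (0:ℝ) ≤ |σ₂ n - σ| := abs_nonneg _
            rw [abs_le, Real.norm_eq_abs, Real.norm_eq_abs]
            constructor <;> linarith
          calc ‖φ x - φ σ‖ ≤ L * ‖x - σ‖ := hlip x σ
            _ ≤ L * (‖σ₁ n - σ‖ + ‖σ₂ n - σ‖) := by
                exact mul_le_mul_of_nonneg_left hxd hL0
        have habs : |σ₂ n - σ₁ n| = σ₂ n - σ₁ n := abs_of_nonneg (by linarith [hlt n])
        rw [norm_mul, Real.norm_eq_abs (ρs n), abs_of_nonneg (hρspos n).le]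
        calc ρs n * ‖∫ x in (σ₁ n)..(σ₂ n), (φ x - φ σ)‖
            ≤ ρs n * ((L * (‖σ₁ n - σ‖ + ‖σ₂ n - σ‖)) * |σ₂ n - σ₁ n|) :=
              mul_le_mul_of_nonneg_left hIb (hρspos n).le
          _ = (L * (‖σ₁ n - σ‖ + ‖σ₂ n - σ‖)) * (ρs n * (σ₂ n - σ₁ n)) := by
              rw [habs]; ring
      · have hz1 : Tendsto (fun n => ‖σ₁ n - σ‖) atTop (nhds 0) := by
          rw [← tendsto_iff_norm_sub_tendsto_zero]; exact hσ₁lim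
        have hz2 : Tendsto (fun n => ‖σ₂ n - σ‖) atTop (nhds 0) := by
          rw [← tendsto_iff_norm_sub_tendsto_zero]; exact hσ₂lim
        have := ((hz1.add hz2).const_mul L).mul hKlim
        simpa using this
    have := hz.add (hKlim.mul (tendsto_const_nhds (x := φ σ)))
    rw [zero_add] at this
    exact this.congr fun n => (heq n).symm
  -- representation of the integrals
  have hindint : ∀ s : ℝ, Integrable (Set.indicator (Set.Iio s) φ) :=
    fun s => hint.indicator measurableSet_Iio
  have hrepr : ∀ (c₁ c₂ : ℝ) (r1 r2 r3 : ℝ),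
      (∫ ξ, (r3 * φ ξ + (r2 - r3) * Set.indicator (Set.Iio c₂) φ ξ +
        (r1 - r2) * Set.indicator (Set.Iio c₁) φ ξ)) =
      r3 * T + (r2 - r3) * F c₂ + (r1 - r2) * F c₁ := by
    intro c₁ c₂ r1 r2 r3
    have i1 : Integrable (fun ξ => r3 * φ ξ) := hint.const_mul r3
    have i2 : Integrable (fun ξ => (r2 - r3) * Set.indicator (Set.Iio c₂) φ ξ) :=
      (hindint c₂).const_mul _
    have i3 : Integrable (fun ξ => (r1 - r2) * Set.indicator (Set.Iio c₁) φ ξ) :=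
      (hindint c₁).const_mul _
    have i12 : Integrable (fun ξ => r3 * φ ξ + (r2 - r3) * Set.indicator (Set.Iio c₂) φ ξ) :=
      i1.add i2
    rw [integral_add i12 i3, integral_add i1 i2, integral_const_mul,
      integral_const_mul, integral_const_mul, integral_indicator measurableSet_Iio,
      integral_indicator measurableSet_Iio, hT, hF]
    simp only [integral_Iic_eq_integral_Iio]
  have hA : ∀ n, (∫ ξ, ρn n ξ * φ ξ) =
      ρp * T + (ρs n - ρp) * F (σ₂ n) + (ρm - ρs n) * F (σ₁ n) := by
    intro n
    have hptw : ∀ ξ, ρn n ξ * φ ξ = ρp * φ ξ +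
        (ρs n - ρp) * Set.indicator (Set.Iio (σ₂ n)) φ ξ +
        (ρm - ρs n) * Set.indicator (Set.Iio (σ₁ n)) φ ξ := by
      intro ξ
      rw [hρn n ξ]
      by_cases h1 : ξ < σ₁ n
      · rw [if_pos h1, Set.indicator_of_mem (Set.mem_Iio.2 (h1.trans (hlt n))),
          Set.indicator_of_mem (Set.mem_Iio.2 h1)]
        ring
      · rw [if_neg h1]
        by_cases h2 : ξ < σ₂ n
        · rw [if_pos h2, Set.indicator_of_mem (Set.mem_Iio.2 h2),
            Set.indicator_of_notMem (fun hc => h1 (Set.mem_Iio.1 hc))]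
          ring
        · rw [if_neg h2, Set.indicator_of_notMem (fun hc => h2 (Set.mem_Iio.1 hc)),
            Set.indicator_of_notMem (fun hc => h1 (Set.mem_Iio.1 hc))]
          ring
    calc (∫ ξ, ρn n ξ * φ ξ)
        = ∫ ξ, (ρp * φ ξ + (ρs n - ρp) * Set.indicator (Set.Iio (σ₂ n)) φ ξ +
            (ρm - ρs n) * Set.indicator (Set.Iio (σ₁ n)) φ ξ) := by
          exact integral_congr_ae (Filter.Eventually.of_forall hptw)
      _ = ρp * T + (ρs n - ρp) * F (σ₂ n) + (ρm - ρs n) * F (σ₁ n) := hrepr _ _ _ _ _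
  have hB : (∫ ξ, H (ξ - σ) * φ ξ) = ρp * T + (ρm - ρp) * F σ := by
    have hptw : ∀ ξ, H (ξ - σ) * φ ξ = ρp * φ ξ +
        (ρm - ρp) * Set.indicator (Set.Iio σ) φ ξ +
        (ρm - ρm) * Set.indicator (Set.Iio σ) φ ξ := by
      intro ξ
      rw [hH]
      by_cases h1 : ξ < σ
      · rw [if_pos (by linarith : ξ - σ < 0), Set.indicator_of_mem (Set.mem_Iio.2 h1)]
        ring
      · rw [if_neg (by simp only [sub_neg]; exact h1),
          Set.indicator_of_notMem (fun hc => h1 (Set.mem_Iio.1 hc))]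
        ring
    calc (∫ ξ, H (ξ - σ) * φ ξ)
        = ∫ ξ, (ρp * φ ξ + (ρm - ρp) * Set.indicator (Set.Iio σ) φ ξ +
            (ρm - ρm) * Set.indicator (Set.Iio σ) φ ξ) :=
          integral_congr_ae (Filter.Eventually.of_forall hptw)
      _ = ρp * T + (ρm - ρp) * F σ + (ρm - ρm) * F σ := hrepr _ _ _ _ _
      _ = ρp * T + (ρm - ρp) * F σ := by ring
  -- final assembly
  have hfinal : Tendsto (fun n => ρp * T + (ρs n - ρp) * F (σ₂ n) + (ρm - ρs n) * F (σ₁ n))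
      atTop (nhds (w * φ σ + (ρp * T + (ρm - ρp) * F σ))) := by
    have hcomb := (tendsto_const_nhds (x := ρp * T)).add
      (((hmid.sub (hF2.const_mul ρp)).add (hF1.const_mul ρm)))
    have hval : ρp * T + ((w * φ σ - ρp * F σ) + ρm * F σ)
        = w * φ σ + (ρp * T + (ρm - ρp) * F σ) := by ring
    rw [hval] at hcomb
    exact hcomb.congr fun n => by ring
  rw [hB]
  exact hfinal.congr fun n => (hA n).symm
end

section
/- Let γ > 1 and ρ₀ > 0. Then ∫_{2ε₁}^{ρ₀} √(ε₂ s^{γ−2}/(s − 2ε₁)) ds → 0 as (ε₁,ε₂) → (0,0) with 0 < 2ε₁ < ρ₀ and ε₂ > 0. Consequently, for u₋ < u₊ and ρ₋, ρ₊ > 0, the fan boundaries u₁^{ε₁ε₂} = u₋ + ∫_{2ε₁}^{ρ₋} √(ε₂ s^{γ−2}/(s − 2ε₁)) ds and u₂^{ε₁ε₂} = u₊ − ∫_{2ε₁}^{ρ₊} √(ε₂ s^{γ−2}/(s − 2ε₁)) ds converge to u₋ and u₊ respectively as (ε₁,ε₂) → (0,0). -/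
/-!
Write `t = s - 2ε₁`. Whatever the sign of `p`, `0 < t ≤ s ≤ ρ` gives `s^(p/2) ≤ ρ^(p/2) + t^(p/2)`,
so the integrand `√(ε₂ s^p / t)` is at most `√ε₂ (ρ^(p/2) t^(-1/2) + t^((p-1)/2))`. For
`p = γ - 2 > -1` both powers of `t` are integrable at `0`, so the integral is bounded by `√ε₂`
times a constant independent of `ε₁`, and therefore tends to `0`.
-/

open Real Filter MeasureTheory Set Topology

lemma rpow_le_rpow_add_rpow {p s t ρ : ℝ} (ht : 0 < t) (hts : t ≤ s) (hsρ : s ≤ ρ) :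
    s ^ p ≤ ρ ^ p + t ^ p := by
  have hs : 0 < s := ht.trans_le hts
  rcases le_total 0 p with hp | hp
  · linarith [rpow_le_rpow hs.le hsρ hp, rpow_pos_of_pos ht p]
  · linarith [rpow_le_rpow_of_nonpos ht hts hp, rpow_pos_of_pos (hs.trans_le hsρ) p]

lemma sqrt_rpow_div {s t : ℝ} (hs : 0 ≤ s) (ht : 0 ≤ t) (p : ℝ) :
    √(s ^ p / t) = s ^ (p / 2) * t ^ (-(1 / 2) : ℝ) := by
  rw [sqrt_eq_rpow, div_rpow (rpow_nonneg hs p) ht, ← rpow_mul hs, rpow_neg ht,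
    div_eq_mul_inv, mul_one_div]

noncomputable def fanMajorant (p ρ t : ℝ) : ℝ :=
  ρ ^ (p / 2) * t ^ (-(1 / 2) : ℝ) + t ^ ((p - 1) / 2)

lemma fanMajorant_nonneg {ρ t : ℝ} (hρ : 0 ≤ ρ) (ht : 0 ≤ t) (p : ℝ) :
    0 ≤ fanMajorant p ρ t := by
  unfold fanMajorant
  positivity

lemma intervalIntegrable_fanMajorant {p : ℝ} (hp : -1 < p) (ρ a b : ℝ) :
    IntervalIntegrable (fanMajorant p ρ) volume a b :=
  ((intervalIntegral.intervalIntegrable_rpow' (by norm_num)).const_mul _).add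
    (intervalIntegral.intervalIntegrable_rpow' (by linarith))

lemma sqrt_rpow_div_le_fanMajorant {p s t ρ : ℝ} (ht : 0 < t) (hts : t ≤ s) (hsρ : s ≤ ρ) :
    √(s ^ p / t) ≤ fanMajorant p ρ t := by
  have hsplit : t ^ (p / 2) * t ^ (-(1 / 2) : ℝ) = t ^ ((p - 1) / 2) := by
    rw [← rpow_add ht]
    ring_nf
  calc √(s ^ p / t) = s ^ (p / 2) * t ^ (-(1 / 2) : ℝ) :=
        sqrt_rpow_div (ht.le.trans hts) ht.le p
    _ ≤ (ρ ^ (p / 2) + t ^ (p / 2)) * t ^ (-(1 / 2) : ℝ) := by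
        gcongr
        exact rpow_le_rpow_add_rpow ht hts hsρ
    _ = fanMajorant p ρ t := by rw [add_mul, hsplit, fanMajorant]

lemma integral_sqrt_rpow_div_sub_le {p ε c ρ : ℝ} (hp : -1 < p) (hε : 0 ≤ ε) (hc : 0 ≤ c)
    (hcρ : c ≤ ρ) :
    ∫ s in c..ρ, √(ε * s ^ p / (s - c)) ≤ √ε * ∫ t in 0..ρ, fanMajorant p ρ t := by
  have hbound : ∀ s ∈ Ioc c ρ, ‖√(ε * s ^ p / (s - c))‖ ≤ √ε * fanMajorant p ρ (s - c) := by
    intro s hs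
    rw [norm_of_nonneg (sqrt_nonneg _), mul_div_assoc, sqrt_mul hε]
    gcongr
    exact sqrt_rpow_div_le_fanMajorant (sub_pos.2 hs.1) (by linarith) hs.2
  have hint : IntervalIntegrable (fun s => √ε * fanMajorant p ρ (s - c)) volume c ρ := by
    simpa using ((intervalIntegrable_fanMajorant hp ρ 0 (ρ - c)).comp_sub_right c).const_mul √ε
  calc ∫ s in c..ρ, √(ε * s ^ p / (s - c))
      ≤ ∫ s in c..ρ, √ε * fanMajorant p ρ (s - c) :=
        (le_abs_self _).trans (intervalIntegral.norm_integral_le_of_norm_le hcρ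
          (Eventually.of_forall hbound) hint)
    _ = √ε * ∫ t in 0..ρ - c, fanMajorant p ρ t := by
        rw [intervalIntegral.integral_const_mul,
          intervalIntegral.integral_comp_sub_right (fanMajorant p ρ), sub_self]
    _ ≤ √ε * ∫ t in 0..ρ, fanMajorant p ρ t := by
        gcongr
        refine intervalIntegral.integral_mono_interval le_rfl (by linarith) (by linarith) ?_
          (intervalIntegrable_fanMajorant hp ρ 0 ρ)
        filter_upwards [ae_restrict_mem measurableSet_Ioc] with t ht
        exact fanMajorant_nonneg (hc.trans hcρ) ht.1.le p

/-- At `q = (ε₁, ε₂)` the fan boundaries are `u₋ + fanIntegral (γ - 2) ρ₋ q` and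
`u₊ - fanIntegral (γ - 2) ρ₊ q`. -/
noncomputable def fanIntegral (p ρ : ℝ) (q : ℝ × ℝ) : ℝ :=
  ∫ s in (2 * q.1)..ρ, √(q.2 * s ^ p / (s - 2 * q.1))

theorem tendsto_fanIntegral {p : ℝ} (hp : -1 < p) (ρ : ℝ) :
    Tendsto (fanIntegral p ρ) (𝓝[{q : ℝ × ℝ | 0 < q.1 ∧ 2 * q.1 < ρ ∧ 0 < q.2}] (0, 0)) (𝓝 0) := by
  set C := ∫ t in 0..ρ, fanMajorant p ρ t
  have hsqrt : Tendsto (fun q : ℝ × ℝ => √q.2 * C) (𝓝 (0, 0)) (𝓝 0) := by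
    simpa using ((continuous_sqrt.comp continuous_snd).tendsto ((0 : ℝ), (0 : ℝ))).mul_const C
  refine tendsto_of_tendsto_of_tendsto_of_le_of_le' tendsto_const_nhds
    (hsqrt.mono_left nhdsWithin_le_nhds) ?_ ?_
  all_goals filter_upwards [self_mem_nhdsWithin] with q ⟨hq₁, hqρ, hq₂⟩
  · exact intervalIntegral.integral_nonneg hqρ.le fun s _ => sqrt_nonneg _
  · exact integral_sqrt_rpow_div_sub_le hp hq₂.le (by linarith) hqρ.le

theorem fan_boundaries_limit_general
    (γ ρ₀ : ℝ) (hγ : 1 < γ) :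
    Filter.Tendsto
      (fun p : ℝ × ℝ => ∫ s in (2 * p.1)..ρ₀,
        Real.sqrt (p.2 * s ^ (γ - 2) / (s - 2 * p.1)))
      (nhdsWithin (0, 0) {p : ℝ × ℝ | 0 < p.1 ∧ 2 * p.1 < ρ₀ ∧ 0 < p.2})
      (nhds 0) ∧
    ∀ um up ρm ρp : ℝ, um < up → 0 < ρm → 0 < ρp →
      Filter.Tendsto
        (fun p : ℝ × ℝ => um + ∫ s in (2 * p.1)..ρm,
          Real.sqrt (p.2 * s ^ (γ - 2) / (s - 2 * p.1)))
        (nhdsWithin (0, 0) {p : ℝ × ℝ | 0 < p.1 ∧ 2 * p.1 < ρm ∧ 0 < p.2})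
        (nhds um) ∧
      Filter.Tendsto
        (fun p : ℝ × ℝ => up - ∫ s in (2 * p.1)..ρp,
          Real.sqrt (p.2 * s ^ (γ - 2) / (s - 2 * p.1)))
        (nhdsWithin (0, 0) {p : ℝ × ℝ | 0 < p.1 ∧ 2 * p.1 < ρp ∧ 0 < p.2})
        (nhds up) := by
  have hp : -1 < γ - 2 := by linarith
  refine ⟨tendsto_fanIntegral hp ρ₀, fun um up ρm ρp _ _ _ => ⟨?_, ?_⟩⟩
  · simpa [fanIntegral] using tendsto_const_nhds.add (tendsto_fanIntegral hp ρm)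
  · simpa [fanIntegral] using tendsto_const_nhds.sub (tendsto_fanIntegral hp ρp)

/-- ∫_{2ε₁}^{ρ₀} √(ε₂ s^{γ−2}/(s−2ε₁)) ds → 0 as
(ε₁,ε₂) → (0,0) through admissible parameters; consequently the fan
boundaries u₁^{ε₁ε₂}, u₂^{ε₁ε₂} converge to u₋, u₊ respectively. -/
theorem fan_boundaries_limit
    (γ ρ₀ : ℝ) (hγ : 1 < γ) (hρ₀ : 0 < ρ₀) :
    Filter.Tendsto
      (fun p : ℝ × ℝ => ∫ s in (2 * p.1)..ρ₀,
        Real.sqrt (p.2 * s ^ (γ - 2) / (s - 2 * p.1)))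
      (nhdsWithin (0, 0) {p : ℝ × ℝ | 0 < p.1 ∧ 2 * p.1 < ρ₀ ∧ 0 < p.2})
      (nhds 0) ∧
    ∀ um up ρm ρp : ℝ, um < up → 0 < ρm → 0 < ρp →
      Filter.Tendsto
        (fun p : ℝ × ℝ => um + ∫ s in (2 * p.1)..ρm,
          Real.sqrt (p.2 * s ^ (γ - 2) / (s - 2 * p.1)))
        (nhdsWithin (0, 0) {p : ℝ × ℝ | 0 < p.1 ∧ 2 * p.1 < ρm ∧ 0 < p.2})
        (nhds um) ∧
      Filter.Tendsto
        (fun p : ℝ × ℝ => up - ∫ s in (2 * p.1)..ρp,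
          Real.sqrt (p.2 * s ^ (γ - 2) / (s - 2 * p.1)))
        (nhdsWithin (0, 0) {p : ℝ × ℝ | 0 < p.1 ∧ 2 * p.1 < ρp ∧ 0 < p.2})
        (nhds up) :=
  fan_boundaries_limit_general γ ρ₀ hγ
end

section
/- Let γ > 1, ρ₋, ρ₊ > 0 and u₋ < u₊. Then there exists ε₀ > 0 such that for all ε₁, ε₂ with 0 < ε₁ < ε₀, 0 < ε₂ < ε₀ and 2ε₁ < min(ρ₋,ρ₊), one has u₋ + ∫_{2ε₁}^{ρ₋} √(ε₂ s^{γ−2}/(s − 2ε₁)) ds < u₊ − ∫_{2ε₁}^{ρ₊} √(ε₂ s^{γ−2}/(s − 2ε₁)) ds; that is, for all sufficiently small flux-perturbation parameters, the two-rarefaction Riemann solution contains a nonempty constant-density intermediate state ρ = 2ε₁. -/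
/-! For `0 ≤ a < s ≤ R` we have `s ^ p ≤ (s - a) ^ p + R ^ p` whatever the sign of `p`, so
the integrand `√(s ^ p / (s - a))` is dominated by
`(s - a) ^ ((p - 1) / 2) + R ^ (p / 2) (s - a) ^ (-1/2)`, which is integrable for `p = γ - 2 > -1`.
Each rarefaction integral is therefore at most `√ε₂` times a constant depending only on `γ` and
`max ρ₋ ρ₊`, uniformly in `ε₁`, and both are below `(u₊ - u₋) / 2` once `ε₂` is small. -/

open MeasureTheory intervalIntegral Real

lemma rpow_le_rpow_sub_add_rpow {a s R : ℝ} (p : ℝ) (ha : 0 ≤ a) (has : a < s) (hsR : s ≤ R) :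
    s ^ p ≤ (s - a) ^ p + R ^ p := by
  rcases le_total 0 p with hp | hp
  · have := rpow_nonneg (sub_nonneg.2 has.le) p
    linarith [rpow_le_rpow (ha.trans has.le) hsR hp]
  · have := rpow_nonneg (ha.trans (has.le.trans hsR)) p
    linarith [rpow_le_rpow_of_nonpos (sub_pos.2 has) (sub_le_self s ha) hp]

lemma sqrt_rpow_div_sub_le {a s R : ℝ} (p : ℝ) (ha : 0 ≤ a) (has : a < s) (hsR : s ≤ R) :
    √(s ^ p / (s - a)) ≤ (s - a) ^ ((p - 1) / 2) + R ^ (p / 2) * (s - a) ^ (-1 / 2 : ℝ) := by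
  have hs : 0 < s - a := sub_pos.2 has
  calc √(s ^ p / (s - a)) = s ^ (p / 2) * (s - a) ^ (-1 / 2 : ℝ) := by
        rw [sqrt_eq_rpow, div_rpow (rpow_nonneg (ha.trans has.le) p) hs.le,
          ← rpow_mul (ha.trans has.le), div_eq_mul_inv, ← rpow_neg hs.le]
        ring_nf
    _ ≤ ((s - a) ^ (p / 2) + R ^ (p / 2)) * (s - a) ^ (-1 / 2 : ℝ) := by
        gcongr
        exact rpow_le_rpow_sub_add_rpow _ ha has hsR
    _ = (s - a) ^ ((p - 1) / 2) + R ^ (p / 2) * (s - a) ^ (-1 / 2 : ℝ) := by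
        rw [add_mul, ← rpow_add hs]
        ring_nf

lemma intervalIntegrable_sub_rpow {q : ℝ} (hq : -1 < q) (a b : ℝ) :
    IntervalIntegrable (fun s => (s - a) ^ q) volume a b := by
  simpa using (intervalIntegrable_rpow' (a := 0) (b := b - a) hq).comp_sub_right a

lemma integral_sub_rpow {q : ℝ} (hq : -1 < q) (a b : ℝ) :
    ∫ s in a..b, (s - a) ^ q = (b - a) ^ (q + 1) / (q + 1) := by
  rw [integral_comp_sub_right (fun s => s ^ q), integral_rpow (Or.inl hq), sub_self,
    zero_rpow (by linarith), sub_zero]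

lemma integral_sqrt_rpow_div_sub_le_s19 {p a ρ R : ℝ} (hp : -1 < p) (ha : 0 ≤ a) (haρ : a ≤ ρ)
    (hρR : ρ ≤ R) :
    ∫ s in a..ρ, √(s ^ p / (s - a)) ≤ (2 / (p + 1) + 2) * R ^ ((p + 1) / 2) := by
  have h₁ := intervalIntegrable_sub_rpow (q := (p - 1) / 2) (by linarith) a ρ
  have h₂ := intervalIntegrable_sub_rpow (q := -1 / 2) (by norm_num) a ρ
  have hR : 0 ≤ R := ha.trans (haρ.trans hρR)
  calc ∫ s in a..ρ, √(s ^ p / (s - a))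
      ≤ ∫ s in a..ρ, ((s - a) ^ ((p - 1) / 2) + R ^ (p / 2) * (s - a) ^ (-1 / 2 : ℝ)) := by
        simp only [integral_of_le haρ]
        exact setIntegral_mono_of_nonneg (fun _ _ => sqrt_nonneg _)
          (fun s hs => sqrt_rpow_div_sub_le p ha hs.1 (hs.2.trans hρR))
          (h₁.add (h₂.const_mul _)).1
    _ = (ρ - a) ^ ((p + 1) / 2) * (2 / (p + 1)) + 2 * (R ^ (p / 2) * (ρ - a) ^ (1 / 2 : ℝ)) := by
        rw [integral_add h₁ (h₂.const_mul _), intervalIntegral.integral_const_mul,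
          integral_sub_rpow (by linarith), integral_sub_rpow (by norm_num),
          show (p - 1) / 2 + 1 = (p + 1) / 2 by ring,
          show (-1 / 2 : ℝ) + 1 = 1 / 2 by norm_num]
        field_simp
    _ ≤ R ^ ((p + 1) / 2) * (2 / (p + 1)) + 2 * (R ^ (p / 2) * R ^ (1 / 2 : ℝ)) := by
        have : 0 < p + 1 := by linarith
        gcongr <;> linarith
    _ = (2 / (p + 1) + 2) * R ^ ((p + 1) / 2) := by
        rw [← rpow_add' hR (by linarith)]
        ring_nf

lemma integral_sqrt_mul_rpow_div_sub_le {ε p a ρ R : ℝ} (hε : 0 ≤ ε) (hp : -1 < p) (ha : 0 ≤ a)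
    (haρ : a ≤ ρ) (hρR : ρ ≤ R) :
    ∫ s in a..ρ, √(ε * s ^ p / (s - a)) ≤ √ε * ((2 / (p + 1) + 2) * R ^ ((p + 1) / 2)) := by
  simp_rw [mul_div_assoc, sqrt_mul hε, intervalIntegral.integral_const_mul]
  gcongr
  exact integral_sqrt_rpow_div_sub_le_s19 hp ha haρ hρR

lemma exists_pos_forall_lt_sqrt_mul_lt (C : ℝ) {δ : ℝ} (hδ : 0 < δ) :
    ∃ ε₀ > 0, ∀ ε < ε₀, √ε * C < δ := by
  have hC : 0 < |C| + 1 := by positivity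
  refine ⟨(δ / (|C| + 1)) ^ 2, by positivity, fun ε hε => ?_⟩
  have hsqrt : √ε < δ / (|C| + 1) := (sqrt_lt' (by positivity)).2 hε
  calc √ε * C ≤ √ε * (|C| + 1) := by gcongr; linarith [le_abs_self C]
    _ < δ := (lt_div_iff₀ hC).1 hsqrt

theorem constant_density_state_appears_general
    (γ ρm ρp um up : ℝ) (hγ : 1 < γ) (hu : um < up) :
    ∃ ε₀ > (0 : ℝ), ∀ ε₁ ε₂ : ℝ, 0 < ε₁ → ε₁ < ε₀ → 0 < ε₂ → ε₂ < ε₀ →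
      2 * ε₁ < min ρm ρp →
      um + (∫ s in (2 * ε₁)..ρm,
          Real.sqrt (ε₂ * s ^ (γ - 2) / (s - 2 * ε₁))) <
        up - ∫ s in (2 * ε₁)..ρp,
          Real.sqrt (ε₂ * s ^ (γ - 2) / (s - 2 * ε₁)) := by
  obtain ⟨ε₀, hε₀, hsmall⟩ := exists_pos_forall_lt_sqrt_mul_lt
    ((2 / (γ - 2 + 1) + 2) * max ρm ρp ^ ((γ - 2 + 1) / 2)) (half_pos (sub_pos.2 hu))
  refine ⟨ε₀, hε₀, fun ε₁ ε₂ hε₁ _ hε₂ hε₂₀ hmin => ?_⟩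
  have hγ₂ : -1 < γ - 2 := by linarith
  have h2ε₁ : 0 ≤ 2 * ε₁ := by positivity
  have hm := integral_sqrt_mul_rpow_div_sub_le hε₂.le hγ₂ h2ε₁
    (hmin.trans_le (min_le_left _ _)).le (le_max_left ρm ρp)
  have hp := integral_sqrt_mul_rpow_div_sub_le hε₂.le hγ₂ h2ε₁
    (hmin.trans_le (min_le_right _ _)).le (le_max_right ρm ρp)
  linarith [hsmall ε₂ hε₂₀]

/-- for all sufficiently small flux-perturbation parameters
ε₁, ε₂, the two-rarefaction Riemann solution contains a nonempty
constant-density intermediate state ρ = 2ε₁, i.e. u₁^{ε₁ε₂} < u₂^{ε₁ε₂}. -/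
theorem constant_density_state_appears
    (γ ρm ρp um up : ℝ) (hγ : 1 < γ) (hρm : 0 < ρm) (hρp : 0 < ρp)
    (hu : um < up) :
    ∃ ε₀ > (0 : ℝ), ∀ ε₁ ε₂ : ℝ, 0 < ε₁ → ε₁ < ε₀ → 0 < ε₂ → ε₂ < ε₀ →
      2 * ε₁ < min ρm ρp →
      um + (∫ s in (2 * ε₁)..ρm,
          Real.sqrt (ε₂ * s ^ (γ - 2) / (s - 2 * ε₁))) <
        up - ∫ s in (2 * ε₁)..ρp,
          Real.sqrt (ε₂ * s ^ (γ - 2) / (s - 2 * ε₁)) :=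
  constant_density_state_appears_general γ ρm ρp um up hγ hu
end
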